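/- arXiv:2310.00353 — 13 statements merged into one kernel-verified Lean document; each statement's English description precedes it below -/
import Mathlib

section
/- Let (h, v1, v2, P11, P12, P22) be a smooth solution of the one-dimensional homogeneous shear shallow water system on an open subset of the (t,x)-plane. Then the stress components satisfy the transport equations: ∂t P11 + v1 ∂x P11 + 2 P11 ∂x v1 = 0, ∂t P12 + v1 ∂x P12 + P12 ∂x v1 + P11 ∂x v2 = 0, and ∂t P22 + v1 ∂x P22 + 2 P12 ∂x v2 = 0. -/
/-- Partial derivative in the first (time) variable. -/
noncomputable def pdt (f : ℝ × ℝ → ℝ) (p : ℝ × ℝ) : ℝ := fderiv ℝ f p (1, 0)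

/-- Partial derivative in the second (space) variable. -/
noncomputable def pdx (f : ℝ × ℝ → ℝ) (p : ℝ × ℝ) : ℝ := fderiv ℝ f p (0, 1)

/-- For a smooth solution of the 1-D homogeneous shear shallow water system,
the stress components satisfy the stated transport equations. -/
theorem ssw_stress_transport
    (Ω : Set (ℝ × ℝ)) (hΩ : IsOpen Ω) (g : ℝ) (hg : 0 < g)
    (h v1 v2 P11 P12 P22 : ℝ × ℝ → ℝ)
    (hsm0 : ContDiffOn ℝ 1 h Ω) (hsm1 : ContDiffOn ℝ 1 v1 Ω)
    (hsm2 : ContDiffOn ℝ 1 v2 Ω) (hsm3 : ContDiffOn ℝ 1 P11 Ω)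
    (hsm4 : ContDiffOn ℝ 1 P12 Ω) (hsm5 : ContDiffOn ℝ 1 P22 Ω)
    (hpos : ∀ p ∈ Ω, 0 < h p)
    (hP11pos : ∀ p ∈ Ω, 0 < P11 p)
    (hdet : ∀ p ∈ Ω, 0 < P11 p * P22 p - P12 p ^ 2)
    (eq1 : ∀ p ∈ Ω, pdt h p + pdx (fun q => h q * v1 q) p = 0)
    (eq2 : ∀ p ∈ Ω, pdt (fun q => h q * v1 q) p
      + pdx (fun q => h q * (v1 q ^ 2 + P11 q)) p + g * h p * pdx h p = 0)
    (eq3 : ∀ p ∈ Ω, pdt (fun q => h q * v2 q) p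
      + pdx (fun q => h q * (v1 q * v2 q + P12 q)) p = 0)
    (eq4 : ∀ p ∈ Ω, pdt (fun q => h q / 2 * (v1 q ^ 2 + P11 q)) p
      + pdx (fun q => h q / 2 * (v1 q * (v1 q ^ 2 + 3 * P11 q))) p
      + g * h p * v1 p * pdx h p = 0)
    (eq5 : ∀ p ∈ Ω, pdt (fun q => h q / 2 * (v1 q * v2 q + P12 q)) p
      + pdx (fun q => h q / 2 * (v1 q ^ 2 * v2 q + 2 * v1 q * P12 q + v2 q * P11 q)) p
      + 1 / 2 * g * h p * v2 p * pdx h p = 0)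
    (eq6 : ∀ p ∈ Ω, pdt (fun q => h q / 2 * (v2 q ^ 2 + P22 q)) p
      + pdx (fun q => h q / 2 * (v1 q * v2 q ^ 2 + 2 * v2 q * P12 q + v1 q * P22 q)) p = 0) :
    ∀ p ∈ Ω,
      pdt P11 p + v1 p * pdx P11 p + 2 * P11 p * pdx v1 p = 0 ∧
      pdt P12 p + v1 p * pdx P12 p + P12 p * pdx v1 p + P11 p * pdx v2 p = 0 ∧
      pdt P22 p + v1 p * pdx P22 p + 2 * P12 p * pdx v2 p = 0 := by
  intro p hp
  have hmem : Ω ∈ nhds p := hΩ.mem_nhds hp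
  have d0 : DifferentiableAt ℝ h p :=
    ((hsm0.differentiableOn one_ne_zero).differentiableAt hmem)
  have d1 : DifferentiableAt ℝ v1 p :=
    ((hsm1.differentiableOn one_ne_zero).differentiableAt hmem)
  have d2 : DifferentiableAt ℝ v2 p :=
    ((hsm2.differentiableOn one_ne_zero).differentiableAt hmem)
  have d3 : DifferentiableAt ℝ P11 p :=
    ((hsm3.differentiableOn one_ne_zero).differentiableAt hmem)
  have d4 : DifferentiableAt ℝ P12 p :=
    ((hsm4.differentiableOn one_ne_zero).differentiableAt hmem)
  have d5 : DifferentiableAt ℝ P22 p :=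
    ((hsm5.differentiableOn one_ne_zero).differentiableAt hmem)
  have F0 := d0.hasFDerivAt
  have F1 := d1.hasFDerivAt
  have F2 := d2.hasFDerivAt
  have F3 := d3.hasFDerivAt
  have F4 := d4.hasFDerivAt
  have F5 := d5.hasFDerivAt
  have Fh : HasFDerivAt (fun q => h q / 2) ((2:ℝ)⁻¹ • fderiv ℝ h p) p := by
    simpa [div_eq_mul_inv] using F0.mul_const ((2:ℝ)⁻¹)
  have F1sq : HasFDerivAt (fun q => v1 q ^ 2)
      (v1 p • fderiv ℝ v1 p + v1 p • fderiv ℝ v1 p) p := by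
    simpa [pow_two] using F1.fun_mul F1
  have F2sq : HasFDerivAt (fun q => v2 q ^ 2)
      (v2 p • fderiv ℝ v2 p + v2 p • fderiv ℝ v2 p) p := by
    simpa [pow_two] using F2.fun_mul F2
  have hA := F0.fun_mul F1
  have hB := F0.fun_mul F2
  have hC := F0.fun_mul (F1sq.fun_add F3)
  have hD := F0.fun_mul ((F1.fun_mul F2).fun_add F4)
  have hE := Fh.fun_mul (F1sq.fun_add F3)
  have hF := Fh.fun_mul (F1.fun_mul (F1sq.fun_add (F3.const_mul 3)))
  have hG := Fh.fun_mul ((F1.fun_mul F2).fun_add F4)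
  have hI := Fh.fun_mul (((F1sq.fun_mul F2).fun_add ((F1.const_mul 2).fun_mul F4)).fun_add (F2.fun_mul F3))
  have hJ := Fh.fun_mul (F2sq.fun_add F5)
  have hK := Fh.fun_mul (((F1.fun_mul F2sq).fun_add ((F2.const_mul 2).fun_mul F4)).fun_add (F1.fun_mul F5))
  have e1 := eq1 p hp
  have e2 := eq2 p hp
  have e3 := eq3 p hp
  have e4 := eq4 p hp
  have e5 := eq5 p hp
  have e6 := eq6 p hp
  simp only [pdt, pdx] at e1 e2 e3 e4 e5 e6 ⊢
  rw [hA.fderiv] at e1 e2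
  rw [hC.fderiv] at e2
  rw [hB.fderiv, hD.fderiv] at e3
  rw [hE.fderiv, hF.fderiv] at e4
  rw [hG.fderiv, hI.fderiv] at e5
  rw [hJ.fderiv, hK.fderiv] at e6
  simp only [ContinuousLinearMap.add_apply, ContinuousLinearMap.coe_smul',
    Pi.smul_apply, smul_eq_mul] at e1 e2 e3 e4 e5 e6
  have hne : h p ≠ 0 := (hpos p hp).ne'
  refine ⟨?_, ?_, ?_⟩
  · have key : h p * (fderiv ℝ P11 p (1, 0) + v1 p * fderiv ℝ P11 p (0, 1)
        + 2 * P11 p * fderiv ℝ v1 p (0, 1)) = 0 := by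
      linear_combination 2 * e4 - 2 * v1 p * e2 + (v1 p ^ 2 - P11 p) * e1
    exact (mul_eq_zero.mp key).resolve_left hne
  · have key : h p * (fderiv ℝ P12 p (1, 0) + v1 p * fderiv ℝ P12 p (0, 1)
        + P12 p * fderiv ℝ v1 p (0, 1) + P11 p * fderiv ℝ v2 p (0, 1)) = 0 := by
      linear_combination 2 * e5 - v1 p * e3 - v2 p * e2 + (v1 p * v2 p - P12 p) * e1
    exact (mul_eq_zero.mp key).resolve_left hne
  · have key : h p * (fderiv ℝ P22 p (1, 0) + v1 p * fderiv ℝ P22 p (0, 1)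
        + 2 * P12 p * fderiv ℝ v2 p (0, 1)) = 0 := by
      linear_combination 2 * e6 - 2 * v2 p * e3 + (v2 p ^ 2 - P22 p) * e1
    exact (mul_eq_zero.mp key).resolve_left hne
end

section
/- Let (h, v1, v2, P11, P12, P22) be a smooth solution of the one-dimensional homogeneous shear shallow water system. Then the determinant det P = P11 P22 − P12^2 satisfies ∂t (det P) + v1 ∂x (det P) + 2 (det P) ∂x v1 = 0. -/
section helpers

variable {f g : ℝ × ℝ → ℝ} {p : ℝ × ℝ} {c : ℝ}

lemma pdt_add (hf : DifferentiableAt ℝ f p) (hg : DifferentiableAt ℝ g p) :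
    pdt (fun q => f q + g q) p = pdt f p + pdt g p := by
  simp [pdt, fderiv_fun_add hf hg]

lemma pdx_add (hf : DifferentiableAt ℝ f p) (hg : DifferentiableAt ℝ g p) :
    pdx (fun q => f q + g q) p = pdx f p + pdx g p := by
  simp [pdx, fderiv_fun_add hf hg]

lemma pdt_sub (hf : DifferentiableAt ℝ f p) (hg : DifferentiableAt ℝ g p) :
    pdt (fun q => f q - g q) p = pdt f p - pdt g p := by
  simp [pdt, fderiv_fun_sub hf hg]

lemma pdx_sub (hf : DifferentiableAt ℝ f p) (hg : DifferentiableAt ℝ g p) :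
    pdx (fun q => f q - g q) p = pdx f p - pdx g p := by
  simp [pdx, fderiv_fun_sub hf hg]

lemma pdt_mul (hf : DifferentiableAt ℝ f p) (hg : DifferentiableAt ℝ g p) :
    pdt (fun q => f q * g q) p = pdt f p * g p + f p * pdt g p := by
  simp [pdt, fderiv_fun_mul hf hg]; ring

lemma pdx_mul (hf : DifferentiableAt ℝ f p) (hg : DifferentiableAt ℝ g p) :
    pdx (fun q => f q * g q) p = pdx f p * g p + f p * pdx g p := by
  simp [pdx, fderiv_fun_mul hf hg]; ring

lemma pdt_sq (hf : DifferentiableAt ℝ f p) :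
    pdt (fun q => f q ^ 2) p = 2 * f p * pdt f p := by
  have h2 : (fun q => f q ^ 2) = fun q => f q * f q := by
    funext q; ring
  rw [h2, pdt_mul hf hf]; ring

lemma pdx_sq (hf : DifferentiableAt ℝ f p) :
    pdx (fun q => f q ^ 2) p = 2 * f p * pdx f p := by
  have h2 : (fun q => f q ^ 2) = fun q => f q * f q := by
    funext q; ring
  rw [h2, pdx_mul hf hf]; ring

lemma pdt_const_mul (hf : DifferentiableAt ℝ f p) :
    pdt (fun q => c * f q) p = c * pdt f p := by
  simp [pdt, fderiv_const_mul hf]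

lemma pdx_const_mul (hf : DifferentiableAt ℝ f p) :
    pdx (fun q => c * f q) p = c * pdx f p := by
  simp [pdx, fderiv_const_mul hf]

lemma pdt_div_const (hf : DifferentiableAt ℝ f p) :
    pdt (fun q => f q / c) p = pdt f p / c := by
  simp only [pdt, div_eq_mul_inv, fderiv_mul_const hf]
  simp [mul_comm]

lemma pdx_div_const (hf : DifferentiableAt ℝ f p) :
    pdx (fun q => f q / c) p = pdx f p / c := by
  simp only [pdx, div_eq_mul_inv, fderiv_mul_const hf]
  simp [mul_comm]

lemma pdt_const : pdt (fun _ => c) p = 0 := by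
  simp [pdt]

lemma pdx_const : pdx (fun _ => c) p = 0 := by
  simp [pdx]

end helpers

/-- For a smooth solution of the 1-D homogeneous shear shallow water system,
the determinant of the stress tensor satisfies
`∂t (det P) + v1 ∂x (det P) + 2 (det P) ∂x v1 = 0`. -/
theorem ssw_detP_transport
    (Ω : Set (ℝ × ℝ)) (hΩ : IsOpen Ω) (g : ℝ) (hg : 0 < g)
    (h v1 v2 P11 P12 P22 : ℝ × ℝ → ℝ)
    (hsm0 : ContDiffOn ℝ 1 h Ω) (hsm1 : ContDiffOn ℝ 1 v1 Ω)
    (hsm2 : ContDiffOn ℝ 1 v2 Ω) (hsm3 : ContDiffOn ℝ 1 P11 Ω)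
    (hsm4 : ContDiffOn ℝ 1 P12 Ω) (hsm5 : ContDiffOn ℝ 1 P22 Ω)
    (hpos : ∀ p ∈ Ω, 0 < h p)
    (hP11pos : ∀ p ∈ Ω, 0 < P11 p)
    (hdet : ∀ p ∈ Ω, 0 < P11 p * P22 p - P12 p ^ 2)
    (eq1 : ∀ p ∈ Ω, pdt h p + pdx (fun q => h q * v1 q) p = 0)
    (eq2 : ∀ p ∈ Ω, pdt (fun q => h q * v1 q) p
      + pdx (fun q => h q * (v1 q ^ 2 + P11 q)) p + g * h p * pdx h p = 0)
    (eq3 : ∀ p ∈ Ω, pdt (fun q => h q * v2 q) p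
      + pdx (fun q => h q * (v1 q * v2 q + P12 q)) p = 0)
    (eq4 : ∀ p ∈ Ω, pdt (fun q => h q / 2 * (v1 q ^ 2 + P11 q)) p
      + pdx (fun q => h q / 2 * (v1 q * (v1 q ^ 2 + 3 * P11 q))) p
      + g * h p * v1 p * pdx h p = 0)
    (eq5 : ∀ p ∈ Ω, pdt (fun q => h q / 2 * (v1 q * v2 q + P12 q)) p
      + pdx (fun q => h q / 2 * (v1 q ^ 2 * v2 q + 2 * v1 q * P12 q + v2 q * P11 q)) p
      + 1 / 2 * g * h p * v2 p * pdx h p = 0)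
    (eq6 : ∀ p ∈ Ω, pdt (fun q => h q / 2 * (v2 q ^ 2 + P22 q)) p
      + pdx (fun q => h q / 2 * (v1 q * v2 q ^ 2 + 2 * v2 q * P12 q + v1 q * P22 q)) p = 0)
    :
    ∀ p ∈ Ω,
      pdt (fun q => P11 q * P22 q - P12 q ^ 2) p
        + v1 p * pdx (fun q => P11 q * P22 q - P12 q ^ 2) p
        + 2 * (P11 p * P22 p - P12 p ^ 2) * pdx v1 p = 0 := by
  intro p hp
  have hmem : Ω ∈ nhds p := hΩ.mem_nhds hp
  have hd0 : DifferentiableAt ℝ h p :=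
    ((hsm0.differentiableOn one_ne_zero).differentiableAt hmem)
  have hd1 : DifferentiableAt ℝ v1 p :=
    ((hsm1.differentiableOn one_ne_zero).differentiableAt hmem)
  have hd2 : DifferentiableAt ℝ v2 p :=
    ((hsm2.differentiableOn one_ne_zero).differentiableAt hmem)
  have hd3 : DifferentiableAt ℝ P11 p :=
    ((hsm3.differentiableOn one_ne_zero).differentiableAt hmem)
  have hd4 : DifferentiableAt ℝ P12 p :=
    ((hsm4.differentiableOn one_ne_zero).differentiableAt hmem)
  have hd5 : DifferentiableAt ℝ P22 p :=
    ((hsm5.differentiableOn one_ne_zero).differentiableAt hmem)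
  have E1 := eq1 p hp
  have E2 := eq2 p hp
  have E3 := eq3 p hp
  have E4 := eq4 p hp
  have E5 := eq5 p hp
  have E6 := eq6 p hp
  simp (disch := fun_prop) only [pdt_add, pdx_add, pdt_sub, pdx_sub, pdt_mul, pdx_mul,
    pdt_sq, pdx_sq, pdt_const_mul, pdx_const_mul, pdt_div_const, pdx_div_const, pdt_const, pdx_const]
    at E1 E2 E3 E4 E5 E6 ⊢
  have hH : h p ≠ 0 := ne_of_gt (hpos p hp)
  -- transport equation for P11
  have eP : h p * (pdt P11 p + v1 p * pdx P11 p + 2 * P11 p * pdx v1 p) = 0 := by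
    linear_combination 2 * E4 - (v1 p ^ 2 + P11 p) * E1 - 2 * v1 p * E2
      + 2 * v1 p ^ 2 * E1
  have eQ : h p * (pdt P12 p + v1 p * pdx P12 p + P12 p * pdx v1 p + P11 p * pdx v2 p) = 0 := by
    linear_combination 2 * E5 - (v1 p * v2 p + P12 p) * E1 - v2 p * E2 + v1 p * v2 p * E1
      - v1 p * E3 + v1 p * v2 p * E1
  have eR : h p * (pdt P22 p + v1 p * pdx P22 p + 2 * P12 p * pdx v2 p) = 0 := by
    linear_combination 2 * E6 - (v2 p ^ 2 + P22 p) * E1 - 2 * v2 p * E3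
      + 2 * v2 p ^ 2 * E1
  have tP : pdt P11 p + v1 p * pdx P11 p + 2 * P11 p * pdx v1 p = 0 :=
    (mul_eq_zero.mp eP).resolve_left hH
  have tQ : pdt P12 p + v1 p * pdx P12 p + P12 p * pdx v1 p + P11 p * pdx v2 p = 0 :=
    (mul_eq_zero.mp eQ).resolve_left hH
  have tR : pdt P22 p + v1 p * pdx P22 p + 2 * P12 p * pdx v2 p = 0 :=
    (mul_eq_zero.mp eR).resolve_left hH
  linear_combination P22 p * tP + P11 p * tR - 2 * P12 p * tQ
end

section
/- Let (h, v1, v2, P11, P12, P22) be a smooth solution of the one-dimensional homogeneous shear shallow water system, and let s = log((P11 P22 − P12^2)/h^2). Then ∂t s + v1 ∂x s = 0. -/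
section pdlemmas

variable (f g : ℝ × ℝ → ℝ) {p : ℝ × ℝ} (w : ℝ × ℝ)

lemma pd_mul (hf : DifferentiableAt ℝ f p) (hg : DifferentiableAt ℝ g p) :
    fderiv ℝ (fun q => f q * g q) p w
      = fderiv ℝ f p w * g p + f p * fderiv ℝ g p w := by
  rw [fderiv_fun_mul hf hg]
  simp only [ContinuousLinearMap.add_apply, ContinuousLinearMap.smul_apply, smul_eq_mul]
  ring

lemma pd_add (hf : DifferentiableAt ℝ f p) (hg : DifferentiableAt ℝ g p) :
    fderiv ℝ (fun q => f q + g q) p w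
      = fderiv ℝ f p w + fderiv ℝ g p w := by
  rw [fderiv_fun_add hf hg]
  simp

lemma pd_sub (hf : DifferentiableAt ℝ f p) (hg : DifferentiableAt ℝ g p) :
    fderiv ℝ (fun q => f q - g q) p w
      = fderiv ℝ f p w - fderiv ℝ g p w := by
  rw [fderiv_fun_sub hf hg]
  simp

lemma pd_sq (hf : DifferentiableAt ℝ f p) :
    fderiv ℝ (fun q => f q ^ 2) p w = 2 * f p * fderiv ℝ f p w := by
  have h2 : (fun q => f q ^ 2) = fun q => f q * f q := by ext q; ring
  rw [h2, pd_mul f f w hf hf]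
  ring

lemma pd_cmul (c : ℝ) (hf : DifferentiableAt ℝ f p) :
    fderiv ℝ (fun q => c * f q) p w = c * fderiv ℝ f p w := by
  rw [fderiv_const_mul hf c]
  simp

lemma pd_half (hf : DifferentiableAt ℝ f p) :
    fderiv ℝ (fun q => f q / 2) p w = fderiv ℝ f p w / 2 := by
  have h2 : (fun q => f q / 2) = fun q => (2:ℝ)⁻¹ * f q := by ext q; ring
  rw [h2, pd_cmul f w (2:ℝ)⁻¹ hf]
  ring

lemma pd_log (hf : DifferentiableAt ℝ f p) (hne : f p ≠ 0) :
    fderiv ℝ (fun q => Real.log (f q)) p w = fderiv ℝ f p w / f p := by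
  rw [(hf.hasFDerivAt.log hne).fderiv]
  simp only [ContinuousLinearMap.smul_apply, smul_eq_mul]
  rw [div_eq_inv_mul]

end pdlemmas

/-- For a smooth solution of the 1-D homogeneous shear shallow water system,
the specific entropy `s = log((P11 P22 - P12^2)/h^2)` satisfies `∂t s + v1 ∂x s = 0`. -/
theorem ssw_entropy_transport
    (Ω : Set (ℝ × ℝ)) (hΩ : IsOpen Ω) (g : ℝ) (hg : 0 < g)
    (h v1 v2 P11 P12 P22 : ℝ × ℝ → ℝ)
    (hsm0 : ContDiffOn ℝ 1 h Ω) (hsm1 : ContDiffOn ℝ 1 v1 Ω)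
    (hsm2 : ContDiffOn ℝ 1 v2 Ω) (hsm3 : ContDiffOn ℝ 1 P11 Ω)
    (hsm4 : ContDiffOn ℝ 1 P12 Ω) (hsm5 : ContDiffOn ℝ 1 P22 Ω)
    (hpos : ∀ p ∈ Ω, 0 < h p)
    (hP11pos : ∀ p ∈ Ω, 0 < P11 p)
    (hdet : ∀ p ∈ Ω, 0 < P11 p * P22 p - P12 p ^ 2)
    (eq1 : ∀ p ∈ Ω, pdt h p + pdx (fun q => h q * v1 q) p = 0)
    (eq2 : ∀ p ∈ Ω, pdt (fun q => h q * v1 q) p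
      + pdx (fun q => h q * (v1 q ^ 2 + P11 q)) p + g * h p * pdx h p = 0)
    (eq3 : ∀ p ∈ Ω, pdt (fun q => h q * v2 q) p
      + pdx (fun q => h q * (v1 q * v2 q + P12 q)) p = 0)
    (eq4 : ∀ p ∈ Ω, pdt (fun q => h q / 2 * (v1 q ^ 2 + P11 q)) p
      + pdx (fun q => h q / 2 * (v1 q * (v1 q ^ 2 + 3 * P11 q))) p
      + g * h p * v1 p * pdx h p = 0)
    (eq5 : ∀ p ∈ Ω, pdt (fun q => h q / 2 * (v1 q * v2 q + P12 q)) p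
      + pdx (fun q => h q / 2 * (v1 q ^ 2 * v2 q + 2 * v1 q * P12 q + v2 q * P11 q)) p
      + 1 / 2 * g * h p * v2 p * pdx h p = 0)
    (eq6 : ∀ p ∈ Ω, pdt (fun q => h q / 2 * (v2 q ^ 2 + P22 q)) p
      + pdx (fun q => h q / 2 * (v1 q * v2 q ^ 2 + 2 * v2 q * P12 q + v1 q * P22 q)) p = 0)
    :
    ∀ p ∈ Ω,
      pdt (fun q => Real.log ((P11 q * P22 q - P12 q ^ 2) / h q ^ 2)) p
        + v1 p * pdx (fun q => Real.log ((P11 q * P22 q - P12 q ^ 2) / h q ^ 2)) p = 0 := by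
  intro p hp
  have hmem : Ω ∈ nhds p := hΩ.mem_nhds hp
  have Dh : DifferentiableAt ℝ h p :=
    ((hsm0.differentiableOn one_ne_zero) p hp).differentiableAt hmem
  have Du : DifferentiableAt ℝ v1 p :=
    ((hsm1.differentiableOn one_ne_zero) p hp).differentiableAt hmem
  have Dw : DifferentiableAt ℝ v2 p :=
    ((hsm2.differentiableOn one_ne_zero) p hp).differentiableAt hmem
  have DA : DifferentiableAt ℝ P11 p :=
    ((hsm3.differentiableOn one_ne_zero) p hp).differentiableAt hmem
  have DB : DifferentiableAt ℝ P12 p :=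
    ((hsm4.differentiableOn one_ne_zero) p hp).differentiableAt hmem
  have DC : DifferentiableAt ℝ P22 p :=
    ((hsm5.differentiableOn one_ne_zero) p hp).differentiableAt hmem
  have hap : h p ≠ 0 := ne_of_gt (hpos p hp)
  have hdp : P11 p * P22 p - P12 p ^ 2 ≠ 0 := ne_of_gt (hdet p hp)
  have Dh2 : DifferentiableAt ℝ (fun q => h q / 2) p := by
    have h2 : (fun q : ℝ × ℝ => h q / 2) = fun q => (2:ℝ)⁻¹ * h q := by ext q; ring
    rw [h2]; exact Dh.const_mul _
  -- expand the six equations at p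
  have e1 := eq1 p hp
  have e2 := eq2 p hp
  have e3 := eq3 p hp
  have e4 := eq4 p hp
  have e5 := eq5 p hp
  have e6 := eq6 p hp
  simp only [pdt, pdx] at e1 e2 e3 e4 e5 e6
  rw [pd_mul h v1 (0,1) Dh Du] at e1
  rw [pd_mul h v1 (1,0) Dh Du,
      pd_mul h (fun q => v1 q ^ 2 + P11 q) (0,1) Dh ((Du.pow 2).add DA),
      pd_add (fun q => v1 q ^ 2) P11 (0,1) (Du.pow 2) DA,
      pd_sq v1 (0,1) Du] at e2
  rw [pd_mul h v2 (1,0) Dh Dw,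
      pd_mul h (fun q => v1 q * v2 q + P12 q) (0,1) Dh ((Du.mul Dw).add DB),
      pd_add (fun q => v1 q * v2 q) P12 (0,1) (Du.mul Dw) DB,
      pd_mul v1 v2 (0,1) Du Dw] at e3
  rw [pd_mul (fun q => h q / 2) (fun q => v1 q ^ 2 + P11 q) (1,0)
        Dh2 ((Du.pow 2).add DA),
      pd_half h (1,0) Dh,
      pd_add (fun q => v1 q ^ 2) P11 (1,0) (Du.pow 2) DA,
      pd_sq v1 (1,0) Du,
      pd_mul (fun q => h q / 2) (fun q => v1 q * (v1 q ^ 2 + 3 * P11 q)) (0,1)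
        Dh2 (Du.mul ((Du.pow 2).add (DA.const_mul (3:ℝ)))),
      pd_half h (0,1) Dh,
      pd_mul v1 (fun q => v1 q ^ 2 + 3 * P11 q) (0,1)
        Du ((Du.pow 2).add (DA.const_mul (3:ℝ))),
      pd_add (fun q => v1 q ^ 2) (fun q => 3 * P11 q) (0,1) (Du.pow 2) (DA.const_mul (3:ℝ)),
      pd_sq v1 (0,1) Du,
      pd_cmul P11 (0,1) 3 DA] at e4
  rw [pd_mul (fun q => h q / 2) (fun q => v1 q * v2 q + P12 q) (1,0)
        Dh2 ((Du.mul Dw).add DB),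
      pd_half h (1,0) Dh,
      pd_add (fun q => v1 q * v2 q) P12 (1,0) (Du.mul Dw) DB,
      pd_mul v1 v2 (1,0) Du Dw,
      pd_mul (fun q => h q / 2)
        (fun q => v1 q ^ 2 * v2 q + 2 * v1 q * P12 q + v2 q * P11 q) (0,1)
        Dh2
        ((((Du.pow 2).mul Dw).add ((Du.const_mul (2:ℝ)).mul DB)).add (Dw.mul DA)),
      pd_half h (0,1) Dh,
      pd_add (fun q => v1 q ^ 2 * v2 q + 2 * v1 q * P12 q) (fun q => v2 q * P11 q) (0,1)
        (((Du.pow 2).mul Dw).add ((Du.const_mul (2:ℝ)).mul DB)) (Dw.mul DA),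
      pd_add (fun q => v1 q ^ 2 * v2 q) (fun q => 2 * v1 q * P12 q) (0,1)
        ((Du.pow 2).mul Dw) ((Du.const_mul (2:ℝ)).mul DB),
      pd_mul (fun q => v1 q ^ 2) v2 (0,1) (Du.pow 2) Dw,
      pd_sq v1 (0,1) Du,
      pd_mul (fun q => 2 * v1 q) P12 (0,1) (Du.const_mul (2:ℝ)) DB,
      pd_cmul v1 (0,1) 2 Du,
      pd_mul v2 P11 (0,1) Dw DA] at e5
  rw [pd_mul (fun q => h q / 2) (fun q => v2 q ^ 2 + P22 q) (1,0)
        Dh2 ((Dw.pow 2).add DC),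
      pd_half h (1,0) Dh,
      pd_add (fun q => v2 q ^ 2) P22 (1,0) (Dw.pow 2) DC,
      pd_sq v2 (1,0) Dw,
      pd_mul (fun q => h q / 2)
        (fun q => v1 q * v2 q ^ 2 + 2 * v2 q * P12 q + v1 q * P22 q) (0,1)
        Dh2
        (((Du.mul (Dw.pow 2)).add ((Dw.const_mul (2:ℝ)).mul DB)).add (Du.mul DC)),
      pd_half h (0,1) Dh,
      pd_add (fun q => v1 q * v2 q ^ 2 + 2 * v2 q * P12 q) (fun q => v1 q * P22 q) (0,1)
        ((Du.mul (Dw.pow 2)).add ((Dw.const_mul (2:ℝ)).mul DB)) (Du.mul DC),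
      pd_add (fun q => v1 q * v2 q ^ 2) (fun q => 2 * v2 q * P12 q) (0,1)
        (Du.mul (Dw.pow 2)) ((Dw.const_mul (2:ℝ)).mul DB),
      pd_mul v1 (fun q => v2 q ^ 2) (0,1) Du (Dw.pow 2),
      pd_sq v2 (0,1) Dw,
      pd_mul (fun q => 2 * v2 q) P12 (0,1) (Dw.const_mul (2:ℝ)) DB,
      pd_cmul v2 (0,1) 2 Dw,
      pd_mul v1 P22 (0,1) Du DC] at e6
  -- rewrite the log in the goal
  have Ddet : DifferentiableAt ℝ (fun q => P11 q * P22 q - P12 q ^ 2) p :=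
    (DA.mul DC).sub (DB.pow 2)
  have hL : fderiv ℝ (fun q => Real.log ((P11 q * P22 q - P12 q ^ 2) / h q ^ 2)) p
      = fderiv ℝ (fun q => Real.log (P11 q * P22 q - P12 q ^ 2) - 2 * Real.log (h q)) p := by
    apply Filter.EventuallyEq.fderiv_eq
    filter_upwards [hmem] with q hq
    rw [Real.log_div (ne_of_gt (hdet q hq)) (pow_ne_zero 2 (ne_of_gt (hpos q hq))),
        Real.log_pow]
    push_cast
    ring
  simp only [pdt, pdx, hL]
  rw [pd_sub (fun q => Real.log (P11 q * P22 q - P12 q ^ 2))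
        (fun q => 2 * Real.log (h q)) (1,0) (Ddet.log hdp) ((Dh.log hap).const_mul (2:ℝ)),
      pd_sub (fun q => Real.log (P11 q * P22 q - P12 q ^ 2))
        (fun q => 2 * Real.log (h q)) (0,1) (Ddet.log hdp) ((Dh.log hap).const_mul (2:ℝ)),
      pd_cmul (fun q => Real.log (h q)) (1,0) 2 (Dh.log hap),
      pd_cmul (fun q => Real.log (h q)) (0,1) 2 (Dh.log hap),
      pd_log (fun q => P11 q * P22 q - P12 q ^ 2) (1,0) Ddet hdp,
      pd_log (fun q => P11 q * P22 q - P12 q ^ 2) (0,1) Ddet hdp,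
      pd_log h (1,0) Dh hap,
      pd_log h (0,1) Dh hap,
      pd_sub (fun q => P11 q * P22 q) (fun q => P12 q ^ 2) (1,0) (DA.mul DC) (DB.pow 2),
      pd_sub (fun q => P11 q * P22 q) (fun q => P12 q ^ 2) (0,1) (DA.mul DC) (DB.pow 2),
      pd_mul P11 P22 (1,0) DA DC,
      pd_mul P11 P22 (0,1) DA DC,
      pd_sq P12 (1,0) DB,
      pd_sq P12 (0,1) DB]
  linear_combination (norm := skip)
    ((P22 p * v1 p ^ 2 + P11 p * v2 p ^ 2 - 2 * P12 p * v1 p * v2 p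
      - 4 * P11 p * P22 p + 4 * P12 p ^ 2) * e1
    + (2 * P12 p * v2 p - 2 * P22 p * v1 p) * e2
    + (2 * P12 p * v1 p - 2 * P11 p * v2 p) * e3
    + 2 * P22 p * e4 - 4 * P12 p * e5 + 2 * P11 p * e6)
      / ((P11 p * P22 p - P12 p ^ 2) * h p)
  have hdp' : P22 p * P11 p - P12 p ^ 2 ≠ 0 := by rwa [mul_comm] at hdp
  field_simp
  ring
end

section
/- Let (h, v1, v2, P11, P12, P22) be a smooth solution of the one-dimensional homogeneous shear shallow water system, let s = log((P11 P22 − P12^2)/h^2), and let H : ℝ → ℝ be any continuously differentiable function. Then ∂t (h H(s)) + ∂x (h v1 H(s)) = 0. -/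
section DirectionalDerivative

variable {E F G : Type*} [NormedAddCommGroup E] [NormedSpace ℝ E] [NormedAddCommGroup F]
  [NormedSpace ℝ F] [NormedAddCommGroup G] [NormedSpace ℝ G]

theorem fderiv_comp_apply_eq_zero {f : E → F} {φ : F → G} {p d : E}
    (hφ : DifferentiableAt ℝ φ (f p)) (hf : DifferentiableAt ℝ f p) (hfd : fderiv ℝ f p d = 0) :
    fderiv ℝ (fun q => φ (f q)) p d = 0 := by
  rw [fderiv_fun_comp p hφ hf, ContinuousLinearMap.comp_apply, hfd, map_zero]

theorem fderiv_div_sq_apply_eq_zero {a b : E → ℝ} {p d : E} {k : ℝ}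
    (ha : DifferentiableAt ℝ a p) (hb : DifferentiableAt ℝ b p) (hb0 : b p ≠ 0)
    (hda : fderiv ℝ a p d = -(2 * k * a p)) (hdb : fderiv ℝ b p d = -(k * b p)) :
    fderiv ℝ (fun q => a q / b q ^ 2) p d = 0 := by
  have hinv := (hasDerivAt_inv (pow_ne_zero 2 hb0)).comp_hasFDerivAt p (hb.hasFDerivAt.pow 2)
  simp only [Function.comp_def] at hinv
  simp only [div_eq_mul_inv]
  rw [(ha.hasFDerivAt.fun_mul hinv).fderiv]
  simp only [add_apply, smul_apply, smul_eq_mul, hda, hdb]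
  field_simp
  ring

end DirectionalDerivative

noncomputable def materialDeriv (u f : ℝ × ℝ → ℝ) (p : ℝ × ℝ) : ℝ := pdt f p + u p * pdx f p

theorem materialDeriv_eq_fderiv (u f : ℝ × ℝ → ℝ) (p : ℝ × ℝ) :
    materialDeriv u f p = fderiv ℝ f p (1, u p) := by
  rw [materialDeriv, pdt, pdx, ← smul_eq_mul, ← map_smul, ← map_add]
  simp

theorem pdt_mul_add_pdx_mul_mul {ρ v φ : ℝ × ℝ → ℝ} {p : ℝ × ℝ}
    (hρ : DifferentiableAt ℝ ρ p) (hv : DifferentiableAt ℝ v p) (hφ : DifferentiableAt ℝ φ p) :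
    pdt (fun q => ρ q * φ q) p + pdx (fun q => ρ q * v q * φ q) p
      = φ p * (pdt ρ p + pdx (fun q => ρ q * v q) p) + ρ p * materialDeriv v φ p := by
  simp (disch := fun_prop) only [materialDeriv, pdt, pdx, fderiv_fun_mul, add_apply, smul_apply,
    smul_eq_mul]
  ring

structure IsSSWSolutionAt (g : ℝ) (h v1 v2 P11 P12 P22 : ℝ × ℝ → ℝ) (p : ℝ × ℝ) : Prop where
  differentiableAt_h : DifferentiableAt ℝ h p
  differentiableAt_v1 : DifferentiableAt ℝ v1 p
  differentiableAt_v2 : DifferentiableAt ℝ v2 p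
  differentiableAt_P11 : DifferentiableAt ℝ P11 p
  differentiableAt_P12 : DifferentiableAt ℝ P12 p
  differentiableAt_P22 : DifferentiableAt ℝ P22 p
  mass : pdt h p + pdx (fun q => h q * v1 q) p = 0
  momentum1 : pdt (fun q => h q * v1 q) p
      + pdx (fun q => h q * (v1 q ^ 2 + P11 q)) p + g * h p * pdx h p = 0
  momentum2 : pdt (fun q => h q * v2 q) p
      + pdx (fun q => h q * (v1 q * v2 q + P12 q)) p = 0
  energy11 : pdt (fun q => h q / 2 * (v1 q ^ 2 + P11 q)) p
      + pdx (fun q => h q / 2 * (v1 q * (v1 q ^ 2 + 3 * P11 q))) p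
      + g * h p * v1 p * pdx h p = 0
  energy12 : pdt (fun q => h q / 2 * (v1 q * v2 q + P12 q)) p
      + pdx (fun q => h q / 2 * (v1 q ^ 2 * v2 q + 2 * v1 q * P12 q + v2 q * P11 q)) p
      + 1 / 2 * g * h p * v2 p * pdx h p = 0
  energy22 : pdt (fun q => h q / 2 * (v2 q ^ 2 + P22 q)) p
      + pdx (fun q => h q / 2 * (v1 q * v2 q ^ 2 + 2 * v2 q * P12 q + v1 q * P22 q)) p = 0

namespace IsSSWSolutionAt

variable {g : ℝ} {h v1 v2 P11 P12 P22 : ℝ × ℝ → ℝ} {p : ℝ × ℝ}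

theorem materialDeriv_h (hs : IsSSWSolutionAt g h v1 v2 P11 P12 P22 p) :
    materialDeriv v1 h p = -(pdx v1 p * h p) := by
  have e1 := hs.mass
  have := hs.differentiableAt_h
  have := hs.differentiableAt_v1
  simp (disch := fun_prop) only [materialDeriv, pdt, pdx, fderiv_fun_mul, add_apply, smul_apply,
    smul_eq_mul] at e1 ⊢
  linear_combination e1

theorem materialDeriv_P11 (hs : IsSSWSolutionAt g h v1 v2 P11 P12 P22 p) (hh : h p ≠ 0) :
    materialDeriv v1 P11 p = -(2 * pdx v1 p * P11 p) := by
  obtain ⟨dh, dv1, -, dP11, -, -, e1, e2, -, e4, -, -⟩ := hs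
  simp (disch := fun_prop) only [materialDeriv, pdt, pdx, div_eq_mul_inv, fderiv_fun_mul,
    fderiv_fun_add, fderiv_fun_pow, fderiv_fun_const, add_apply, smul_apply, smul_eq_mul,
    Pi.zero_apply, zero_apply] at e1 e2 e4 ⊢
  apply mul_left_cancel₀ hh
  linear_combination 2 * e4 - 2 * v1 p * e2 + (v1 p ^ 2 - P11 p) * e1

theorem materialDeriv_P12 (hs : IsSSWSolutionAt g h v1 v2 P11 P12 P22 p) (hh : h p ≠ 0) :
    materialDeriv v1 P12 p = -(pdx v1 p * P12 p + pdx v2 p * P11 p) := by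
  obtain ⟨dh, dv1, dv2, dP11, dP12, -, e1, e2, e3, -, e5, -⟩ := hs
  simp (disch := fun_prop) only [materialDeriv, pdt, pdx, div_eq_mul_inv, fderiv_fun_mul,
    fderiv_fun_add, fderiv_fun_pow, fderiv_fun_const, add_apply, smul_apply, smul_eq_mul,
    Pi.zero_apply, zero_apply] at e1 e2 e3 e5 ⊢
  apply mul_left_cancel₀ hh
  linear_combination 2 * e5 - v2 p * e2 - v1 p * e3 + (v1 p * v2 p - P12 p) * e1

theorem materialDeriv_P22 (hs : IsSSWSolutionAt g h v1 v2 P11 P12 P22 p) (hh : h p ≠ 0) :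
    materialDeriv v1 P22 p = -(2 * pdx v2 p * P12 p) := by
  obtain ⟨dh, dv1, dv2, -, dP12, dP22, e1, -, e3, -, -, e6⟩ := hs
  simp (disch := fun_prop) only [materialDeriv, pdt, pdx, div_eq_mul_inv, fderiv_fun_mul,
    fderiv_fun_add, fderiv_fun_pow, fderiv_fun_const, add_apply, smul_apply, smul_eq_mul,
    Pi.zero_apply, zero_apply] at e1 e3 e6 ⊢
  apply mul_left_cancel₀ hh
  linear_combination 2 * e6 - 2 * v2 p * e3 + (v2 p ^ 2 - P22 p) * e1

theorem materialDeriv_det (hs : IsSSWSolutionAt g h v1 v2 P11 P12 P22 p) (hh : h p ≠ 0) :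
    materialDeriv v1 (fun q => P11 q * P22 q - P12 q ^ 2) p
      = -(2 * pdx v1 p * (P11 p * P22 p - P12 p ^ 2)) := by
  have h11 := hs.materialDeriv_P11 hh
  have h12 := hs.materialDeriv_P12 hh
  have h22 := hs.materialDeriv_P22 hh
  have := hs.differentiableAt_P11
  have := hs.differentiableAt_P12
  have := hs.differentiableAt_P22
  rw [materialDeriv_eq_fderiv] at h11 h12 h22 ⊢
  simp (disch := fun_prop) only [fderiv_fun_sub, fderiv_fun_mul, fderiv_fun_pow, sub_apply,
    add_apply, smul_apply, smul_eq_mul]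
  linear_combination P22 p * h11 + P11 p * h22 - 2 * P12 p * h12

theorem differentiableAt_det_div_sq (hs : IsSSWSolutionAt g h v1 v2 P11 P12 P22 p)
    (hh : h p ≠ 0) :
    DifferentiableAt ℝ (fun q => (P11 q * P22 q - P12 q ^ 2) / h q ^ 2) p := by
  have := hs.differentiableAt_h
  have := hs.differentiableAt_P11
  have := hs.differentiableAt_P12
  have := hs.differentiableAt_P22
  fun_prop (disch := positivity)

theorem materialDeriv_det_div_sq (hs : IsSSWSolutionAt g h v1 v2 P11 P12 P22 p) (hh : h p ≠ 0) :
    materialDeriv v1 (fun q => (P11 q * P22 q - P12 q ^ 2) / h q ^ 2) p = 0 := by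
  have hdet := hs.materialDeriv_det hh
  have hmass := hs.materialDeriv_h
  have := hs.differentiableAt_P11
  have := hs.differentiableAt_P12
  have := hs.differentiableAt_P22
  rw [materialDeriv_eq_fderiv] at hdet hmass ⊢
  exact fderiv_div_sq_apply_eq_zero (by fun_prop) hs.differentiableAt_h hh hdet hmass

end IsSSWSolutionAt

theorem ssw_hHs_conservation_general
    (Ω : Set (ℝ × ℝ)) (hΩ : IsOpen Ω) (g : ℝ)
    (h v1 v2 P11 P12 P22 : ℝ × ℝ → ℝ)
    (hsm0 : ContDiffOn ℝ 1 h Ω) (hsm1 : ContDiffOn ℝ 1 v1 Ω)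
    (hsm2 : ContDiffOn ℝ 1 v2 Ω) (hsm3 : ContDiffOn ℝ 1 P11 Ω)
    (hsm4 : ContDiffOn ℝ 1 P12 Ω) (hsm5 : ContDiffOn ℝ 1 P22 Ω)
    (hpos : ∀ p ∈ Ω, 0 < h p)
    (hdet : ∀ p ∈ Ω, 0 < P11 p * P22 p - P12 p ^ 2)
    (eq1 : ∀ p ∈ Ω, pdt h p + pdx (fun q => h q * v1 q) p = 0)
    (eq2 : ∀ p ∈ Ω, pdt (fun q => h q * v1 q) p
      + pdx (fun q => h q * (v1 q ^ 2 + P11 q)) p + g * h p * pdx h p = 0)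
    (eq3 : ∀ p ∈ Ω, pdt (fun q => h q * v2 q) p
      + pdx (fun q => h q * (v1 q * v2 q + P12 q)) p = 0)
    (eq4 : ∀ p ∈ Ω, pdt (fun q => h q / 2 * (v1 q ^ 2 + P11 q)) p
      + pdx (fun q => h q / 2 * (v1 q * (v1 q ^ 2 + 3 * P11 q))) p
      + g * h p * v1 p * pdx h p = 0)
    (eq5 : ∀ p ∈ Ω, pdt (fun q => h q / 2 * (v1 q * v2 q + P12 q)) p
      + pdx (fun q => h q / 2 * (v1 q ^ 2 * v2 q + 2 * v1 q * P12 q + v2 q * P11 q)) p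
      + 1 / 2 * g * h p * v2 p * pdx h p = 0)
    (eq6 : ∀ p ∈ Ω, pdt (fun q => h q / 2 * (v2 q ^ 2 + P22 q)) p
      + pdx (fun q => h q / 2 * (v1 q * v2 q ^ 2 + 2 * v2 q * P12 q + v1 q * P22 q)) p = 0)
    (H : ℝ → ℝ) (hH : ContDiff ℝ 1 H) :
    ∀ p ∈ Ω,
      pdt (fun q => h q * H (Real.log ((P11 q * P22 q - P12 q ^ 2) / h q ^ 2))) p
        + pdx (fun q => h q * v1 q * H (Real.log ((P11 q * P22 q - P12 q ^ 2) / h q ^ 2))) p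
        = 0 := by
  intro p hp
  have hd {f : ℝ × ℝ → ℝ} (hf : ContDiffOn ℝ 1 f Ω) : DifferentiableAt ℝ f p :=
    (hf.contDiffAt (hΩ.mem_nhds hp)).differentiableAt one_ne_zero
  have hs : IsSSWSolutionAt g h v1 v2 P11 P12 P22 p :=
    ⟨hd hsm0, hd hsm1, hd hsm2, hd hsm3, hd hsm4, hd hsm5,
      eq1 p hp, eq2 p hp, eq3 p hp, eq4 p hp, eq5 p hp, eq6 p hp⟩
  have hh : h p ≠ 0 := (hpos p hp).ne'
  set X := fun q => (P11 q * P22 q - P12 q ^ 2) / h q ^ 2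
  have hXd : DifferentiableAt ℝ X p := hs.differentiableAt_det_div_sq hh
  have hHlog : DifferentiableAt ℝ (fun x => H (Real.log x)) (X p) :=
    (hH.differentiable one_ne_zero _).comp _
      (Real.differentiableAt_log (div_pos (hdet p hp) (pow_pos (hpos p hp) 2)).ne')
  have hHs : materialDeriv v1 (fun q => H (Real.log (X q))) p = 0 := by
    have hX0 := hs.materialDeriv_det_div_sq hh
    rw [materialDeriv_eq_fderiv] at hX0 ⊢
    exact fderiv_comp_apply_eq_zero (φ := fun x => H (Real.log x)) hHlog hXd hX0
  rw [pdt_mul_add_pdx_mul_mul (φ := fun q => H (Real.log (X q))) hs.differentiableAt_h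
    hs.differentiableAt_v1 (hHlog.comp p hXd), hs.mass, hHs]
  ring

/-- For a smooth solution of the 1-D homogeneous shear shallow water system and any
continuously differentiable `H : ℝ → ℝ`, with `s = log((P11 P22 - P12^2)/h^2)`,
one has `∂t (h H(s)) + ∂x (h v1 H(s)) = 0`. -/
theorem ssw_hHs_conservation
    (Ω : Set (ℝ × ℝ)) (hΩ : IsOpen Ω) (g : ℝ) (hg : 0 < g)
    (h v1 v2 P11 P12 P22 : ℝ × ℝ → ℝ)
    (hsm0 : ContDiffOn ℝ 1 h Ω) (hsm1 : ContDiffOn ℝ 1 v1 Ω)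
    (hsm2 : ContDiffOn ℝ 1 v2 Ω) (hsm3 : ContDiffOn ℝ 1 P11 Ω)
    (hsm4 : ContDiffOn ℝ 1 P12 Ω) (hsm5 : ContDiffOn ℝ 1 P22 Ω)
    (hpos : ∀ p ∈ Ω, 0 < h p)
    (hP11pos : ∀ p ∈ Ω, 0 < P11 p)
    (hdet : ∀ p ∈ Ω, 0 < P11 p * P22 p - P12 p ^ 2)
    (eq1 : ∀ p ∈ Ω, pdt h p + pdx (fun q => h q * v1 q) p = 0)
    (eq2 : ∀ p ∈ Ω, pdt (fun q => h q * v1 q) p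
      + pdx (fun q => h q * (v1 q ^ 2 + P11 q)) p + g * h p * pdx h p = 0)
    (eq3 : ∀ p ∈ Ω, pdt (fun q => h q * v2 q) p
      + pdx (fun q => h q * (v1 q * v2 q + P12 q)) p = 0)
    (eq4 : ∀ p ∈ Ω, pdt (fun q => h q / 2 * (v1 q ^ 2 + P11 q)) p
      + pdx (fun q => h q / 2 * (v1 q * (v1 q ^ 2 + 3 * P11 q))) p
      + g * h p * v1 p * pdx h p = 0)
    (eq5 : ∀ p ∈ Ω, pdt (fun q => h q / 2 * (v1 q * v2 q + P12 q)) p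
      + pdx (fun q => h q / 2 * (v1 q ^ 2 * v2 q + 2 * v1 q * P12 q + v2 q * P11 q)) p
      + 1 / 2 * g * h p * v2 p * pdx h p = 0)
    (eq6 : ∀ p ∈ Ω, pdt (fun q => h q / 2 * (v2 q ^ 2 + P22 q)) p
      + pdx (fun q => h q / 2 * (v1 q * v2 q ^ 2 + 2 * v2 q * P12 q + v1 q * P22 q)) p = 0)
    (H : ℝ → ℝ) (hH : ContDiff ℝ 1 H) :
    ∀ p ∈ Ω,
      pdt (fun q => h q * H (Real.log ((P11 q * P22 q - P12 q ^ 2) / h q ^ 2))) p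
        + pdx (fun q => h q * v1 q * H (Real.log ((P11 q * P22 q - P12 q ^ 2) / h q ^ 2))) p
        = 0 :=
  ssw_hHs_conservation_general Ω hΩ g h v1 v2 P11 P12 P22 hsm0 hsm1 hsm2 hsm3 hsm4 hsm5 hpos hdet
    eq1 eq2 eq3 eq4 eq5 eq6 H hH
end

section
/- For every admissible state (h, v1, v2, P11, P12, P22) with h > 0, P11 > 0, P22 > 0 and D := P11 P22 − P12^2 > 0, and every g > 0, the entropy variable vector V ∈ ℝ^6 is orthogonal to both non-conservative coefficient vectors: V · B^x = 0 and V · B^y = 0, where B^x = (0, g h, 0, g h v1, (1/2) g h v2, 0) and B^y = (0, 0, g h, 0, (1/2) g h v1, g h v2). -/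
/-! The momentum entries of `V` are linear in the velocity, with coefficients given by the
stress entries: `(V2, V3) = -(v1 V4 + v2 V5 / 2, v1 V5 / 2 + v2 V6)`. Pairing `V` with `B^x`
or `B^y` yields `g h` times exactly one of these combinations, which therefore vanishes.
Here `Vk` is the entry `entVar … (k - 1)`. -/

open Matrix

/-- The entropy variable vector of the shear shallow water model, as a function of the
primitive state `(h, v1, v2, P11, P12, P22)`. -/
noncomputable def entVar (h v1 v2 P11 P12 P22 : ℝ) : Fin 6 → ℝ :=
  ![4 - Real.log ((P11 * P22 - P12 ^ 2) / h ^ 2)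
      - (P11 * v2 ^ 2 + P22 * v1 ^ 2 - 2 * P12 * v1 * v2) / (P11 * P22 - P12 ^ 2),
    2 * (P22 * v1 - P12 * v2) / (P11 * P22 - P12 ^ 2),
    2 * (P11 * v2 - P12 * v1) / (P11 * P22 - P12 ^ 2),
    -2 * P22 / (P11 * P22 - P12 ^ 2),
    4 * P12 / (P11 * P22 - P12 ^ 2),
    -2 * P11 / (P11 * P22 - P12 ^ 2)]

section

variable (h v1 v2 P11 P12 P22 : ℝ)

theorem entVar_one_eq :
    entVar h v1 v2 P11 P12 P22 1 =
      -(v1 * entVar h v1 v2 P11 P12 P22 3 + v2 / 2 * entVar h v1 v2 P11 P12 P22 4) := by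
  simp only [entVar, Fin.isValue, cons_val]
  ring

theorem entVar_two_eq :
    entVar h v1 v2 P11 P12 P22 2 =
      -(v1 / 2 * entVar h v1 v2 P11 P12 P22 4 + v2 * entVar h v1 v2 P11 P12 P22 5) := by
  simp only [entVar, Fin.isValue, cons_val]
  ring

end

theorem ssw_entVar_orthogonal_B_general (h v1 v2 P11 P12 P22 g : ℝ) :
    entVar h v1 v2 P11 P12 P22 ⬝ᵥ ![0, g * h, 0, g * h * v1, 1 / 2 * g * h * v2, 0] = 0 ∧
    entVar h v1 v2 P11 P12 P22 ⬝ᵥ ![0, 0, g * h, 0, 1 / 2 * g * h * v1, g * h * v2] = 0 := by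
  constructor
  all_goals
    simp only [dotProduct, Fin.sum_univ_six, Fin.isValue, cons_val]
    rw [entVar_one_eq, entVar_two_eq]
    ring

/-- For every admissible state and every `g > 0`, the entropy variable vector is orthogonal
to both non-conservative coefficient vectors `B^x` and `B^y` of the SSW model. -/
theorem ssw_entVar_orthogonal_B (h v1 v2 P11 P12 P22 g : ℝ)
    (hh : 0 < h) (h11 : 0 < P11) (h22 : 0 < P22)
    (hD : 0 < P11 * P22 - P12 ^ 2) (hg : 0 < g) :
    entVar h v1 v2 P11 P12 P22 ⬝ᵥ ![0, g * h, 0, g * h * v1, 1 / 2 * g * h * v2, 0] = 0 ∧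
    entVar h v1 v2 P11 P12 P22 ⬝ᵥ ![0, 0, g * h, 0, 1 / 2 * g * h * v1, g * h * v2] = 0 :=
  ssw_entVar_orthogonal_B_general h v1 v2 P11 P12 P22 g
end

section
/- For every admissible state (h, v1, v2, P11, P12, P22) with h > 0 and D := P11 P22 − P12^2 > 0, the entropy potentials satisfy V · F^x − q^x = 2 h v1 and V · F^y − q^y = 2 h v2, where V is the entropy variable vector, F^x, F^y are the conservative fluxes of the SSW model, and q^x = −h v1 s, q^y = −h v2 s with s = log(D/h^2). -/
open Matrix

@[simp]
lemma cons_val_five' {α : Type*} {m : ℕ} (x : α) (u : Fin m.succ.succ.succ.succ.succ → α) :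
    Matrix.vecCons x u 5 = Matrix.vecHead (Matrix.vecTail (Matrix.vecTail (Matrix.vecTail (Matrix.vecTail u)))) :=
  rfl

/-- The `x`-direction conservative flux of the SSW model. -/
noncomputable def fluxX (h v1 v2 P11 P12 P22 : ℝ) : Fin 6 → ℝ :=
  ![h * v1, h * (v1 ^ 2 + P11), h * (v1 * v2 + P12),
    h / 2 * (v1 * (v1 ^ 2 + 3 * P11)),
    h / 2 * (v1 ^ 2 * v2 + 2 * v1 * P12 + v2 * P11),
    h / 2 * (v1 * v2 ^ 2 + 2 * v2 * P12 + v1 * P22)]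

/-- The `y`-direction conservative flux of the SSW model. -/
noncomputable def fluxY (h v1 v2 P11 P12 P22 : ℝ) : Fin 6 → ℝ :=
  ![h * v2, h * (v1 * v2 + P12), h * (v2 ^ 2 + P22),
    h / 2 * (v1 ^ 2 * v2 + 2 * v1 * P12 + v2 * P11),
    h / 2 * (v1 * v2 ^ 2 + 2 * v2 * P12 + v1 * P22),
    h / 2 * (v2 ^ 3 + 3 * v2 * P22)]

/-- The entropy potentials of the SSW model: `V · F^x − q^x = 2 h v1` and
`V · F^y − q^y = 2 h v2`, where `q^x = −h v1 s`, `q^y = −h v2 s`. -/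
theorem ssw_entropy_potentials (h v1 v2 P11 P12 P22 : ℝ)
    (hh : 0 < h) (hD : 0 < P11 * P22 - P12 ^ 2) :
    entVar h v1 v2 P11 P12 P22 ⬝ᵥ fluxX h v1 v2 P11 P12 P22
      - (-(h * v1 * Real.log ((P11 * P22 - P12 ^ 2) / h ^ 2))) = 2 * h * v1 ∧
    entVar h v1 v2 P11 P12 P22 ⬝ᵥ fluxY h v1 v2 P11 P12 P22
      - (-(h * v2 * Real.log ((P11 * P22 - P12 ^ 2) / h ^ 2))) = 2 * h * v2 := by
  have hD' : P11 * P22 - P12 ^ 2 ≠ 0 := ne_of_gt hD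
  constructor <;>
  · simp [entVar, fluxX, fluxY, dotProduct, Fin.sum_univ_six]
    field_simp
    ring
end

section
/- Let W_L = (h_L, v1_L, v2_L, P11_L, P12_L, P22_L) and W_R = (h_R, v1_R, v2_R, P11_R, P12_R, P22_R) be two admissible states (h > 0, P11 > 0, P22 > 0, D = P11 P22 − P12^2 > 0 for each). Then the two-point entropy conservative flux F̃^x = (f1, ..., f6) defined below satisfies Tadmor's jump condition (V(W_R) − V(W_L)) · F̃^x = ψ^x(W_R) − ψ^x(W_L), where V is the entropy variable vector and ψ^x = 2 h v1. -/
open Matrix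

/-- Logarithmic mean, with the convention `logMean a a = a`. -/
noncomputable def logMean (a b : ℝ) : ℝ :=
  if a = b then a else (b - a) / (Real.log b - Real.log a)

/-- The two-point entropy conservative flux `F̃^x` of the SSW model of
Chandrashekar et al., built from arithmetic and logarithmic means. -/
noncomputable def ecFluxX (hL v1L v2L P11L P12L P22L hR v1R v2R P11R P12R P22R : ℝ) :
    Fin 6 → ℝ :=
  let DL := P11L * P22L - P12L ^ 2
  let DR := P11R * P22R - P12R ^ 2
  let b11L := P11L / DL; let b12L := P12L / DL; let b22L := P22L / DL
  let b11R := P11R / DR; let b12R := P12R / DR; let b22R := P22R / DR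
  let DbL := b11L * b22L - b12L ^ 2
  let DbR := b11R * b22R - b12R ^ 2
  let b11 := (b11L + b11R) / 2; let b12 := (b12L + b12R) / 2; let b22 := (b22L + b22R) / 2
  let hbar := (hL + hR) / 2
  let v1bar := (v1L + v1R) / 2; let v2bar := (v2L + v2R) / 2
  let den := b11 * b22 - b12 ^ 2
  let f1 := logMean hL hR * v1bar
  let f2 := v1bar * f1 + hbar * b11 / den
  let f3 := v2bar * f1 + hbar * b12 / den
  let f4 := 1 / 2 * (b11 / logMean DbL DbR - (v1L ^ 2 + v1R ^ 2) / 2) * f1 + v1bar * f2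
  let f5 := 1 / 2 * ((b12 / logMean DbL DbR - (v1L * v2L + v1R * v2R) / 2) * f1
    + v1bar * f3 + v2bar * f2)
  let f6 := 1 / 2 * (b22 / logMean DbL DbR - (v2L ^ 2 + v2R ^ 2) / 2) * f1 + v2bar * f3
  ![f1, f2, f3, f4, f5, f6]


lemma logMean_mul_log_sub {a b : ℝ} (ha : 0 < a) (hb : 0 < b) :
    logMean a b * (Real.log b - Real.log a) = b - a := by
  unfold logMean
  split_ifs with h
  · subst h; ring
  · rw [div_mul_cancel₀]
    intro hlog
    apply h
    have h2 := congrArg Real.exp (sub_eq_zero.mp hlog)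
    rw [Real.exp_log hb, Real.exp_log ha] at h2
    exact h2.symm

lemma logMean_pos {a b : ℝ} (ha : 0 < a) (hb : 0 < b) : 0 < logMean a b := by
  unfold logMean
  split_ifs with h
  · exact ha
  · rcases Ne.lt_or_gt h with hab | hab
    · have := Real.log_lt_log ha hab
      exact div_pos (by linarith) (by linarith)
    · have := Real.log_lt_log hb hab
      exact div_pos_iff.mpr (Or.inr ⟨by linarith, by linarith⟩)

lemma detmean_pos {x1 y1 z1 x2 y2 z2 : ℝ} (hx1 : 0 < x1) (hx2 : 0 < x2)
    (hy1 : 0 < y1) (hy2 : 0 < y2) (d1 : z1 ^ 2 < x1 * y1) (d2 : z2 ^ 2 < x2 * y2) :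
    0 < (x1 + x2) / 2 * ((y1 + y2) / 2) - ((z1 + z2) / 2) ^ 2 := by
  have prod : z1 ^ 2 * z2 ^ 2 < x1 * y1 * (x2 * y2) := by
    nlinarith [sq_nonneg z1, sq_nonneg z2, mul_pos hx1 hy1, mul_pos hx2 hy2]
  have hS : 0 < x1 * y2 + x2 * y1 := by positivity
  have hSsq : 4 * (z1 * z2) ^ 2 < (x1 * y2 + x2 * y1) ^ 2 := by
    nlinarith [sq_nonneg (x1 * y2 - x2 * y1), prod]
  have key : 2 * z1 * z2 < x1 * y2 + x2 * y1 := by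
    rcases le_or_gt (z1 * z2) 0 with hz | hz
    · nlinarith
    · nlinarith [mul_pos hz hS, mul_pos hz hz]
  nlinarith

set_option maxHeartbeats 2000000 in
/-- Tadmor's jump condition for the two-point entropy conservative flux of the SSW model:
`(V(W_R) − V(W_L)) · F̃^x = ψ^x(W_R) − ψ^x(W_L)` with entropy potential `ψ^x = 2 h v1`. -/
theorem ssw_ecFlux_jump_condition
    (hL v1L v2L P11L P12L P22L hR v1R v2R P11R P12R P22R : ℝ)
    (hhL : 0 < hL) (h11L : 0 < P11L) (h22L : 0 < P22L)
    (hDL : 0 < P11L * P22L - P12L ^ 2)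
    (hhR : 0 < hR) (h11R : 0 < P11R) (h22R : 0 < P22R)
    (hDR : 0 < P11R * P22R - P12R ^ 2) :
    (entVar hR v1R v2R P11R P12R P22R - entVar hL v1L v2L P11L P12L P22L) ⬝ᵥ
        ecFluxX hL v1L v2L P11L P12L P22L hR v1R v2R P11R P12R P22R
      = 2 * hR * v1R - 2 * hL * v1L := by
  have hDLne : P11L * P22L - P12L ^ 2 ≠ 0 := ne_of_gt hDL
  have hDRne : P11R * P22R - P12R ^ 2 ≠ 0 := ne_of_gt hDR
  have eDbL : P11L / (P11L * P22L - P12L ^ 2) * (P22L / (P11L * P22L - P12L ^ 2)) -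
      (P12L / (P11L * P22L - P12L ^ 2)) ^ 2 = (P11L * P22L - P12L ^ 2)⁻¹ := by
    field_simp
  have eDbR : P11R / (P11R * P22R - P12R ^ 2) * (P22R / (P11R * P22R - P12R ^ 2)) -
      (P12R / (P11R * P22R - P12R ^ 2)) ^ 2 = (P11R * P22R - P12R ^ 2)⁻¹ := by
    field_simp
  have hDbL : (0:ℝ) < P11L / (P11L * P22L - P12L ^ 2) * (P22L / (P11L * P22L - P12L ^ 2)) -
      (P12L / (P11L * P22L - P12L ^ 2)) ^ 2 := by rw [eDbL]; positivity
  have hDbR : (0:ℝ) < P11R / (P11R * P22R - P12R ^ 2) * (P22R / (P11R * P22R - P12R ^ 2)) -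
      (P12R / (P11R * P22R - P12R ^ 2)) ^ 2 := by rw [eDbR]; positivity
  have hden : (0:ℝ) < (P11L / (P11L * P22L - P12L ^ 2) + P11R / (P11R * P22R - P12R ^ 2)) / 2 *
        ((P22L / (P11L * P22L - P12L ^ 2) + P22R / (P11R * P22R - P12R ^ 2)) / 2) -
      ((P12L / (P11L * P22L - P12L ^ 2) + P12R / (P11R * P22R - P12R ^ 2)) / 2) ^ 2 := by
    apply detmean_pos
    · positivity
    · positivity
    · positivity
    · positivity
    · nlinarith [hDbL]
    · nlinarith [hDbR]
  have vec6_five : ∀ (a b c d e f : ℝ), ![a, b, c, d, e, f] (5 : Fin 6) = f := fun _ _ _ _ _ _ => rfl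
  simp only [entVar, ecFluxX, dotProduct, Fin.sum_univ_six, Pi.sub_apply, vec6_five,
    Matrix.cons_val_zero, Matrix.cons_val_one, Matrix.head_cons, Matrix.cons_val_two,
    Matrix.tail_cons, Matrix.cons_val_three, Matrix.cons_val_four, Matrix.cons_val_fin_one,
    Matrix.cons_val_succ, Matrix.cons_val']
  have elogR : Real.log ((P11R * P22R - P12R ^ 2) / hR ^ 2) =
      Real.log (P11R * P22R - P12R ^ 2) - 2 * Real.log hR := by
    rw [Real.log_div hDRne (by positivity), Real.log_pow]; push_cast; ring
  have elogL : Real.log ((P11L * P22L - P12L ^ 2) / hL ^ 2) =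
      Real.log (P11L * P22L - P12L ^ 2) - 2 * Real.log hL := by
    rw [Real.log_div hDLne (by positivity), Real.log_pow]; push_cast; ring
  have elogDR : Real.log (P11R * P22R - P12R ^ 2) =
      -Real.log (P11R / (P11R * P22R - P12R ^ 2) * (P22R / (P11R * P22R - P12R ^ 2)) -
        (P12R / (P11R * P22R - P12R ^ 2)) ^ 2) := by
    rw [eDbR, Real.log_inv, neg_neg]
  have elogDL : Real.log (P11L * P22L - P12L ^ 2) =
      -Real.log (P11L / (P11L * P22L - P12L ^ 2) * (P22L / (P11L * P22L - P12L ^ 2)) -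
        (P12L / (P11L * P22L - P12L ^ 2)) ^ 2) := by
    rw [eDbL, Real.log_inv, neg_neg]
  have hqR : (P11R * v2R ^ 2 + P22R * v1R ^ 2 - 2 * P12R * v1R * v2R) /
        (P11R * P22R - P12R ^ 2) =
      P11R / (P11R * P22R - P12R ^ 2) * v2R ^ 2 + P22R / (P11R * P22R - P12R ^ 2) * v1R ^ 2 -
        2 * (P12R / (P11R * P22R - P12R ^ 2)) * v1R * v2R := by ring
  have hqL : (P11L * v2L ^ 2 + P22L * v1L ^ 2 - 2 * P12L * v1L * v2L) /
        (P11L * P22L - P12L ^ 2) =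
      P11L / (P11L * P22L - P12L ^ 2) * v2L ^ 2 + P22L / (P11L * P22L - P12L ^ 2) * v1L ^ 2 -
        2 * (P12L / (P11L * P22L - P12L ^ 2)) * v1L * v2L := by ring
  have h2R : 2 * (P22R * v1R - P12R * v2R) / (P11R * P22R - P12R ^ 2) =
      2 * (P22R / (P11R * P22R - P12R ^ 2) * v1R - P12R / (P11R * P22R - P12R ^ 2) * v2R) := by
    ring
  have h2L : 2 * (P22L * v1L - P12L * v2L) / (P11L * P22L - P12L ^ 2) =
      2 * (P22L / (P11L * P22L - P12L ^ 2) * v1L - P12L / (P11L * P22L - P12L ^ 2) * v2L) := by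
    ring
  have h3R : 2 * (P11R * v2R - P12R * v1R) / (P11R * P22R - P12R ^ 2) =
      2 * (P11R / (P11R * P22R - P12R ^ 2) * v2R - P12R / (P11R * P22R - P12R ^ 2) * v1R) := by
    ring
  have h3L : 2 * (P11L * v2L - P12L * v1L) / (P11L * P22L - P12L ^ 2) =
      2 * (P11L / (P11L * P22L - P12L ^ 2) * v2L - P12L / (P11L * P22L - P12L ^ 2) * v1L) := by
    ring
  have h4R : -2 * P22R / (P11R * P22R - P12R ^ 2) =
      -2 * (P22R / (P11R * P22R - P12R ^ 2)) := by ring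
  have h4L : -2 * P22L / (P11L * P22L - P12L ^ 2) =
      -2 * (P22L / (P11L * P22L - P12L ^ 2)) := by ring
  have h5R : 4 * P12R / (P11R * P22R - P12R ^ 2) =
      4 * (P12R / (P11R * P22R - P12R ^ 2)) := by ring
  have h5L : 4 * P12L / (P11L * P22L - P12L ^ 2) =
      4 * (P12L / (P11L * P22L - P12L ^ 2)) := by ring
  have h6R : -2 * P11R / (P11R * P22R - P12R ^ 2) =
      -2 * (P11R / (P11R * P22R - P12R ^ 2)) := by ring
  have h6L : -2 * P11L / (P11L * P22L - P12L ^ 2) =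
      -2 * (P11L / (P11L * P22L - P12L ^ 2)) := by ring
  rw [elogR, elogL, elogDR, elogDL, hqR, hqL, h2R, h2L, h3R, h3L, h4R, h4L, h5R, h5L,
    h6R, h6L]
  clear elogR elogL elogDR elogDL hqR hqL h2R h2L h3R h3L h4R h4L h5R h5L h6R h6L
  clear eDbL eDbR
  set b11L := P11L / (P11L * P22L - P12L ^ 2) with hb11L
  set b12L := P12L / (P11L * P22L - P12L ^ 2) with hb12L
  set b22L := P22L / (P11L * P22L - P12L ^ 2) with hb22L
  set b11R := P11R / (P11R * P22R - P12R ^ 2) with hb11R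
  set b12R := P12R / (P11R * P22R - P12R ^ 2) with hb12R
  set b22R := P22R / (P11R * P22R - P12R ^ 2) with hb22R
  set A := logMean hL hR with hAdef
  set B := logMean (b11L * b22L - b12L ^ 2) (b11R * b22R - b12R ^ 2) with hBdef
  have hApos : 0 < A := logMean_pos hhL hhR
  have hBpos : 0 < B := logMean_pos hDbL hDbR
  have hA := logMean_mul_log_sub hhL hhR
  have hB := logMean_mul_log_sub hDbL hDbR
  rw [← hAdef] at hA
  rw [← hBdef] at hB
  have hlogh : Real.log hR = Real.log hL + (hR - hL) / A := by
    field_simp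
    linear_combination hA
  have hlogDb : Real.log (b11R * b22R - b12R ^ 2) = Real.log (b11L * b22L - b12L ^ 2) +
      ((b11R * b22R - b12R ^ 2) - (b11L * b22L - b12L ^ 2)) / B := by
    field_simp
    linear_combination hB
  rw [hlogh, hlogDb]
  have hdenne : (b11L + b11R) / 2 * ((b22L + b22R) / 2) - ((b12L + b12R) / 2) ^ 2 ≠ 0 :=
    ne_of_gt hden
  clear hb11L hb12L hb22L hb11R hb12R hb22R hAdef hBdef hA hDbL hDbR hden
  clear_value b11L b12L b22L b11R b12R b22R A B
  have e1 : A * A⁻¹ = 1 := mul_inv_cancel₀ hApos.ne'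
  have e2 : ((b11L + b11R) / 2 * ((b22L + b22R) / 2) - ((b12L + b12R) / 2) ^ 2) *
      ((b11L + b11R) / 2 * ((b22L + b22R) / 2) - ((b12L + b12R) / 2) ^ 2)⁻¹ = 1 :=
    mul_inv_cancel₀ hdenne
  linear_combination ((hL + hR) * (v1R - v1L)) * e2 + ((hR - hL) * (v1L + v1R)) * e1
end

section
/- (Tadmor's entropy conservation theorem, semi-discrete 1D periodic version.) Let n, N ≥ 1, Δx > 0, let η : ℝ^n → ℝ be differentiable with gradient V(u) = ∇η(u), let ψ : ℝ^n → ℝ, and let F̃ : ℝ^n × ℝ^n → ℝ^n satisfy the jump condition (V(b) − V(a)) · F̃(a,b) = ψ(b) − ψ(a) for all a, b ∈ ℝ^n. Let U : ℝ → (ℤ/Nℤ → ℝ^n) be differentiable in t and satisfy, for every cell i, d/dt U_i = −(F̃(U_i, U_{i+1}) − F̃(U_{i−1}, U_i))/Δx. Then for every i and t, d/dt η(U_i) + (q̃_{i+1/2} − q̃_{i−1/2})/Δx = 0, where q̃_{i+1/2} = (1/2)(V(U_i) + V(U_{i+1})) · F̃(U_i, U_{i+1}) − (1/2)(ψ(U_i)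 + ψ(U_{i+1})). -/
/-!
Contracting the scheme with `V(U_i)` gives `d/dt η(U_i) = -(V(U_i)·F̃_{i+1/2} - V(U_i)·F̃_{i-1/2}) / Δx`.
The jump condition lets each numerical entropy flux be written from either of its two cells:
`q̃(a, b) = V(a)·F̃(a, b) - ψ(a) = V(b)·F̃(a, b) - ψ(b)`. Using the left form for `q̃_{i+1/2}` and the
right form for `q̃_{i-1/2}`, both evaluated at `U_i`, the difference `q̃_{i+1/2} - q̃_{i-1/2}` is
exactly `V(U_i)·(F̃_{i+1/2} - F̃_{i-1/2})`.
-/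

open Matrix

section EntropyFlux

variable {α ι : Type*} [Fintype ι] (V : α → ι → ℝ) (ψ : α → ℝ) (F : α → α → ι → ℝ)

noncomputable def numEntropyFlux (a b : α) : ℝ :=
  1 / 2 * ((V a + V b) ⬝ᵥ F a b) - 1 / 2 * (ψ a + ψ b)

variable {V ψ F} {a b : α}

theorem numEntropyFlux_eq_left (hjump : (V b - V a) ⬝ᵥ F a b = ψ b - ψ a) :
    numEntropyFlux V ψ F a b = V a ⬝ᵥ F a b - ψ a := by
  rw [sub_dotProduct] at hjump
  rw [numEntropyFlux, add_dotProduct]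
  linarith

theorem numEntropyFlux_eq_right (hjump : (V b - V a) ⬝ᵥ F a b = ψ b - ψ a) :
    numEntropyFlux V ψ F a b = V b ⬝ᵥ F a b - ψ b := by
  rw [numEntropyFlux_eq_left hjump]
  rw [sub_dotProduct] at hjump
  linarith

end EntropyFlux

theorem sum_smul_proj_apply {ι : Type*} [Fintype ι] (v w : ι → ℝ) :
    (∑ k, v k • (ContinuousLinearMap.proj k : (ι → ℝ) →L[ℝ] ℝ)) w = v ⬝ᵥ w := by
  simp [dotProduct]

theorem HasDerivAt.comp_of_hasGradient {ι : Type*} [Fintype ι] {η : (ι → ℝ) → ℝ}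
    {V : (ι → ℝ) → ι → ℝ}
    (hV : ∀ u, HasFDerivAt η (∑ k, V u k • (ContinuousLinearMap.proj k : (ι → ℝ) →L[ℝ] ℝ)) u)
    {u : ℝ → ι → ℝ} {u' : ι → ℝ} {t : ℝ} (hu : HasDerivAt u u' t) :
    HasDerivAt (fun τ => η (u τ)) (V (u t) ⬝ᵥ u') t := by
  have h := (hV (u t)).comp_hasDerivAt t hu
  rwa [sum_smul_proj_apply] at h

theorem tadmor_entropy_conservation_general
    (n N : ℕ) (Δx : ℝ)
    (η ψ : (Fin n → ℝ) → ℝ) (V : (Fin n → ℝ) → (Fin n → ℝ))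
    (hV : ∀ u, HasFDerivAt η (∑ k, V u k • (ContinuousLinearMap.proj k : (Fin n → ℝ) →L[ℝ] ℝ)) u)
    (Ftil : (Fin n → ℝ) → (Fin n → ℝ) → (Fin n → ℝ))
    (hjump : ∀ a b, (V b - V a) ⬝ᵥ Ftil a b = ψ b - ψ a)
    (U : ℝ → ZMod N → (Fin n → ℝ))
    (hU : ∀ (t : ℝ) (i : ZMod N), HasDerivAt (fun τ => U τ i)
      (-(Δx)⁻¹ • (Ftil (U t i) (U t (i + 1)) - Ftil (U t (i - 1)) (U t i))) t)
    (qtil : ℝ → ZMod N → ℝ)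
    (hqtil : ∀ (t : ℝ) (i : ZMod N), qtil t i
      = 1 / 2 * ((V (U t i) + V (U t (i + 1))) ⬝ᵥ Ftil (U t i) (U t (i + 1)))
        - 1 / 2 * (ψ (U t i) + ψ (U t (i + 1)))) :
    ∀ (t : ℝ) (i : ZMod N),
      deriv (fun τ => η (U τ i)) t + (qtil t i - qtil t (i - 1)) / Δx = 0 := by
  intro t i
  have hright : qtil t i = V (U t i) ⬝ᵥ Ftil (U t i) (U t (i + 1)) - ψ (U t i) :=
    (hqtil t i).trans (numEntropyFlux_eq_left (hjump _ _))
  have hleft : qtil t (i - 1) = V (U t i) ⬝ᵥ Ftil (U t (i - 1)) (U t i) - ψ (U t i) := by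
    have h := (hqtil t (i - 1)).trans (numEntropyFlux_eq_right (hjump _ _))
    rwa [sub_add_cancel] at h
  rw [((hU t i).comp_of_hasGradient hV).deriv, hright, hleft, dotProduct_smul, dotProduct_sub,
    smul_eq_mul]
  ring

/-- Tadmor's entropy conservation theorem, semi-discrete 1-D periodic version: if the
two-point flux `F̃` satisfies the jump condition, then the semi-discrete scheme satisfies
a discrete entropy equality with numerical entropy flux
`q̃_{i+1/2} = ½(V_i + V_{i+1})·F̃(U_i,U_{i+1}) − ½(ψ_i + ψ_{i+1})`. -/
theorem tadmor_entropy_conservation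
    (n N : ℕ) (hn : 1 ≤ n) (hN : 1 ≤ N) [NeZero N] (Δx : ℝ) (hΔx : 0 < Δx)
    (η ψ : (Fin n → ℝ) → ℝ) (V : (Fin n → ℝ) → (Fin n → ℝ))
    (hV : ∀ u, HasFDerivAt η (∑ k, V u k • (ContinuousLinearMap.proj k : (Fin n → ℝ) →L[ℝ] ℝ)) u)
    (Ftil : (Fin n → ℝ) → (Fin n → ℝ) → (Fin n → ℝ))
    (hjump : ∀ a b, (V b - V a) ⬝ᵥ Ftil a b = ψ b - ψ a)
    (U : ℝ → ZMod N → (Fin n → ℝ))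
    (hU : ∀ (t : ℝ) (i : ZMod N), HasDerivAt (fun τ => U τ i)
      (-(Δx)⁻¹ • (Ftil (U t i) (U t (i + 1)) - Ftil (U t (i - 1)) (U t i))) t)
    (qtil : ℝ → ZMod N → ℝ)
    (hqtil : ∀ (t : ℝ) (i : ZMod N), qtil t i
      = 1 / 2 * ((V (U t i) + V (U t (i + 1))) ⬝ᵥ Ftil (U t i) (U t (i + 1)))
        - 1 / 2 * (ψ (U t i) + ψ (U t (i + 1)))) :
    ∀ (t : ℝ) (i : ZMod N),
      deriv (fun τ => η (U τ i)) t + (qtil t i - qtil t (i - 1)) / Δx = 0 :=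
  tadmor_entropy_conservation_general n N Δx η ψ V hV Ftil hjump U hU qtil hqtil
end

section
/- (Tadmor's entropy stability lemma, semi-discrete 1D periodic version.) Let n, N ≥ 1, Δx > 0, η : ℝ^n → ℝ differentiable with V = ∇η, ψ : ℝ^n → ℝ, and F̃ : ℝ^n × ℝ^n → ℝ^n satisfying (V(b) − V(a)) · F̃(a,b) = ψ(b) − ψ(a) for all a, b. For each interface let D_{i+1/2}(t) be a symmetric positive semidefinite n×n real matrix, and define F̂_{i+1/2} = F̃(U_i, U_{i+1}) − (1/2) D_{i+1/2} (V(U_{i+1}) − V(U_i)). If U : ℝ → (ℤ/Nℤ → ℝ^n) is differentiable and satisfies d/dt U_i = −(F̂_{i+1/2} − F̂_{i−1/2})/Δx for all i, then for every i and t, d/dt η(U_i) + (q̂_{i+1/2} − q̂_{i−1/2})/Δx ≤ 0, where q̂_{i+1/2} = q̃_{i+1/2} − (1/2) ((V(U_i) + V(U_{i+1}))/2)ᵀ D_{i+1/2} (V(U_{i+1}) − V(U_i)) and q̃_{i+1/2} = (1/2)(V(U_i) + V(U_{i+1})) · F̃(U_i, U_{i+1}) − (1/2)(ψ(U_i) +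 ψ(U_{i+1})). -/
open Matrix

/-- Tadmor's entropy stability lemma, semi-discrete 1-D periodic version: adding
dissipation `−½ D_{i+1/2} (V_{i+1} − V_i)` with `D_{i+1/2}` symmetric positive
semidefinite to an entropy conservative flux yields a scheme satisfying a discrete
entropy inequality. -/
theorem tadmor_entropy_stability
    (n N : ℕ) (hn : 1 ≤ n) (hN : 1 ≤ N) [NeZero N] (Δx : ℝ) (hΔx : 0 < Δx)
    (η ψ : (Fin n → ℝ) → ℝ) (V : (Fin n → ℝ) → (Fin n → ℝ))
    (hV : ∀ u, HasFDerivAt η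
      (∑ k, V u k • (ContinuousLinearMap.proj k : (Fin n → ℝ) →L[ℝ] ℝ)) u)
    (Ftil : (Fin n → ℝ) → (Fin n → ℝ) → (Fin n → ℝ))
    (hjump : ∀ a b, (V b - V a) ⬝ᵥ Ftil a b = ψ b - ψ a)
    (Dm : ℝ → ZMod N → Matrix (Fin n) (Fin n) ℝ)
    (hDsym : ∀ (t : ℝ) (i : ZMod N), (Dm t i).IsSymm)
    (hDpsd : ∀ (t : ℝ) (i : ZMod N), (Dm t i).PosSemidef)
    (U : ℝ → ZMod N → (Fin n → ℝ))
    (Fhat : ℝ → ZMod N → (Fin n → ℝ))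
    (hFhat : ∀ (t : ℝ) (i : ZMod N), Fhat t i = Ftil (U t i) (U t (i + 1))
      - (1 / 2 : ℝ) • (Dm t i).mulVec (V (U t (i + 1)) - V (U t i)))
    (hU : ∀ (t : ℝ) (i : ZMod N), HasDerivAt (fun τ => U τ i)
      (-(Δx)⁻¹ • (Fhat t i - Fhat t (i - 1))) t)
    (qtil qhat : ℝ → ZMod N → ℝ)
    (hqtil : ∀ (t : ℝ) (i : ZMod N), qtil t i
      = 1 / 2 * ((V (U t i) + V (U t (i + 1))) ⬝ᵥ Ftil (U t i) (U t (i + 1)))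
        - 1 / 2 * (ψ (U t i) + ψ (U t (i + 1))))
    (hqhat : ∀ (t : ℝ) (i : ZMod N), qhat t i
      = qtil t i - 1 / 2 * (((1 / 2 : ℝ) • (V (U t i) + V (U t (i + 1)))) ⬝ᵥ
          (Dm t i).mulVec (V (U t (i + 1)) - V (U t i)))) :
    ∀ (t : ℝ) (i : ZMod N),
      deriv (fun τ => η (U τ i)) t + (qhat t i - qhat t (i - 1)) / Δx ≤ 0 := by
  intro t i
  have hi1 : (i - 1) + 1 = i := by ring
  set a := U t (i - 1) with ha
  set b := U t i with hb
  set c := U t (i + 1) with hc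
  set F1 := Ftil a b with hF1d
  set F2 := Ftil b c with hF2d
  set D1 := Dm t (i - 1) with hD1d
  set D2 := Dm t i with hD2d
  -- scalar abbreviations
  set p1 := V a ⬝ᵥ F1 with hp1
  set p2 := V b ⬝ᵥ F1 with hp2
  set p3 := V b ⬝ᵥ F2 with hp3
  set p4 := V c ⬝ᵥ F2 with hp4
  set d1a := V a ⬝ᵥ D1.mulVec (V b - V a) with hd1a
  set d1b := V b ⬝ᵥ D1.mulVec (V b - V a) with hd1b
  set d2b := V b ⬝ᵥ D2.mulVec (V c - V b) with hd2b
  set d2c := V c ⬝ᵥ D2.mulVec (V c - V b) with hd2c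
  -- jump conditions
  have hj1 : p2 - p1 = ψ b - ψ a := by
    have := hjump a b
    simpa [sub_dotProduct, hp1, hp2] using this
  have hj2 : p4 - p3 = ψ c - ψ b := by
    have := hjump b c
    simpa [sub_dotProduct, hp3, hp4] using this
  -- positive semidefiniteness
  have hpsd1 : 0 ≤ d1b - d1a := by
    have := (hDpsd t (i - 1)).dotProduct_mulVec_nonneg (V b - V a)
    simpa [sub_dotProduct, hd1a, hd1b, ← hD1d] using this
  have hpsd2 : 0 ≤ d2c - d2b := by
    have := (hDpsd t i).dotProduct_mulVec_nonneg (V c - V b)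
    simpa [sub_dotProduct, hd2b, hd2c, ← hD2d] using this
  -- the fluxes at the two interfaces
  have hFi : Fhat t i = F2 - (1 / 2 : ℝ) • D2.mulVec (V c - V b) := by
    rw [hFhat]
  have hFim : Fhat t (i - 1) = F1 - (1 / 2 : ℝ) • D1.mulVec (V b - V a) := by
    rw [hFhat, hi1]
  -- entropy flux values
  have hq2 : qhat t i = 1 / 2 * (p3 + p4) - 1 / 2 * (ψ b + ψ c)
      - 1 / 4 * (d2b + d2c) := by
    rw [hqhat, hqtil]
    simp only [← hb, ← hc, ← hF2d, ← hD2d, add_dotProduct, smul_dotProduct,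
      smul_eq_mul, hp3, hp4, hd2b, hd2c]
    ring
  have hq1 : qhat t (i - 1) = 1 / 2 * (p1 + p2) - 1 / 2 * (ψ a + ψ b)
      - 1 / 4 * (d1a + d1b) := by
    rw [hqhat, hqtil, hi1]
    simp only [← ha, ← hb, ← hF1d, ← hD1d, add_dotProduct, smul_dotProduct,
      smul_eq_mul, hp1, hp2, hd1a, hd1b]
    try ring
  -- derivative of the entropy
  have hX : V b ⬝ᵥ (Fhat t i - Fhat t (i - 1))
      = (p3 - 1 / 2 * d2b) - (p2 - 1 / 2 * d1b) := by
    rw [hFi, hFim]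
    simp only [dotProduct_sub, dotProduct_smul, smul_eq_mul, hp2, hp3, hd1b, hd2b]
    try ring
  have hd : HasDerivAt (fun τ => η (U τ i))
      (V b ⬝ᵥ (-(Δx)⁻¹ • (Fhat t i - Fhat t (i - 1)))) t := by
    have h := (hV (U t i)).comp_hasDerivAt t (hU t i)
    have hL : ∀ w : Fin n → ℝ,
        (∑ k, V (U t i) k • (ContinuousLinearMap.proj k : (Fin n → ℝ) →L[ℝ] ℝ)) w
          = V (U t i) ⬝ᵥ w := by
      intro w
      simp [dotProduct, ContinuousLinearMap.sum_apply, mul_comm]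
    simpa [hL, hb, Function.comp_def] using h
  rw [hd.deriv]
  have hVs : V b ⬝ᵥ (-(Δx)⁻¹ • (Fhat t i - Fhat t (i - 1)))
      = -(Δx)⁻¹ * (V b ⬝ᵥ (Fhat t i - Fhat t (i - 1))) := by
    simp [dotProduct_smul]
  rw [hVs]
  have key : (qhat t i - qhat t (i - 1))
      - V b ⬝ᵥ (Fhat t i - Fhat t (i - 1)) ≤ 0 := by
    rw [hX, hq2, hq1]; linarith
  have heq : -(Δx)⁻¹ * (V b ⬝ᵥ (Fhat t i - Fhat t (i - 1)))
      + (qhat t i - qhat t (i - 1)) / Δx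
      = ((qhat t i - qhat t (i - 1)) - V b ⬝ᵥ (Fhat t i - Fhat t (i - 1))) / Δx := by
    field_simp
    ring
  rw [heq]
  exact div_nonpos_of_nonpos_of_nonneg key hΔx.le
end

section
/- (Entropy stability with non-conservative terms that are orthogonal to the entropy variables.) Under the hypotheses of the entropy stability lemma (n, N ≥ 1, Δx > 0, η differentiable with V = ∇η, ψ, F̃ satisfying the Tadmor jump condition, D_{i+1/2}(t) symmetric positive semidefinite, F̂_{i+1/2} = F̃(U_i,U_{i+1}) − (1/2) D_{i+1/2}(V(U_{i+1}) − V(U_i))), let additionally B : ℝ^n → ℝ^n satisfy V(u) · B(u) = 0 for all u ∈ ℝ^n, and let c_i(t) be arbitrary real-valued functions. If U is differentiable and satisfies d/dt U_i = −(F̂_{i+1/2} − F̂_{i−1/2})/Δx − c_i B(U_i) for all i, then for every i and t, d/dt η(U_i) + (q̂_{i+1/2} − q̂_{i−1/2})/Δx ≤ 0, with q̂ as in the entropy stability lemma. -/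
open Matrix

/-- Algebraic identity at a single edge: the entropy-variable/flux combination
at the left and right cell of an edge, relative to the numerical entropy flux. -/
lemma edge_aux (n : ℕ) (ψa ψb : ℝ) (Va Vb F : Fin n → ℝ) (D : Matrix (Fin n) (Fin n) ℝ)
    (hj : (Vb - Va) ⬝ᵥ F = ψb - ψa) :
    (Va ⬝ᵥ (F - (1/2:ℝ) • D.mulVec (Vb - Va))
      - ((1/2 * ((Va + Vb) ⬝ᵥ F) - 1/2 * (ψa + ψb))
        - 1/2 * (((1/2:ℝ) • (Va + Vb)) ⬝ᵥ D.mulVec (Vb - Va)))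
      = ψa + 1/4 * ((Vb - Va) ⬝ᵥ D.mulVec (Vb - Va)))
    ∧ (Vb ⬝ᵥ (F - (1/2:ℝ) • D.mulVec (Vb - Va))
      - ((1/2 * ((Va + Vb) ⬝ᵥ F) - 1/2 * (ψa + ψb))
        - 1/2 * (((1/2:ℝ) • (Va + Vb)) ⬝ᵥ D.mulVec (Vb - Va)))
      = ψb - 1/4 * ((Vb - Va) ⬝ᵥ D.mulVec (Vb - Va))) := by
  simp only [dotProduct_sub, dotProduct_smul, add_dotProduct, sub_dotProduct,
    smul_dotProduct, smul_eq_mul] at *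
  constructor <;> linarith

/-- Entropy stability with non-conservative terms that are orthogonal to the entropy
variables: if additionally `V(u) · B(u) = 0` for all `u`, then the scheme with the extra
non-conservative contribution `−c_i B(U_i)` still satisfies the discrete entropy
inequality. -/
theorem tadmor_entropy_stability_nonconservative
    (n N : ℕ) (hn : 1 ≤ n) (hN : 1 ≤ N) [NeZero N] (Δx : ℝ) (hΔx : 0 < Δx)
    (η ψ : (Fin n → ℝ) → ℝ) (V : (Fin n → ℝ) → (Fin n → ℝ))
    (hV : ∀ u, HasFDerivAt η
      (∑ k, V u k • (ContinuousLinearMap.proj k : (Fin n → ℝ) →L[ℝ] ℝ)) u)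
    (Ftil : (Fin n → ℝ) → (Fin n → ℝ) → (Fin n → ℝ))
    (hjump : ∀ a b, (V b - V a) ⬝ᵥ Ftil a b = ψ b - ψ a)
    (Dm : ℝ → ZMod N → Matrix (Fin n) (Fin n) ℝ)
    (hDsym : ∀ (t : ℝ) (i : ZMod N), (Dm t i).IsSymm)
    (hDpsd : ∀ (t : ℝ) (i : ZMod N), (Dm t i).PosSemidef)
    (B : (Fin n → ℝ) → (Fin n → ℝ))
    (hB : ∀ u, V u ⬝ᵥ B u = 0)
    (c : ℝ → ZMod N → ℝ)
    (U : ℝ → ZMod N → (Fin n → ℝ))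
    (Fhat : ℝ → ZMod N → (Fin n → ℝ))
    (hFhat : ∀ (t : ℝ) (i : ZMod N), Fhat t i = Ftil (U t i) (U t (i + 1))
      - (1 / 2 : ℝ) • (Dm t i).mulVec (V (U t (i + 1)) - V (U t i)))
    (hU : ∀ (t : ℝ) (i : ZMod N), HasDerivAt (fun τ => U τ i)
      (-(Δx)⁻¹ • (Fhat t i - Fhat t (i - 1)) - c t i • B (U t i)) t)
    (qtil qhat : ℝ → ZMod N → ℝ)
    (hqtil : ∀ (t : ℝ) (i : ZMod N), qtil t i
      = 1 / 2 * ((V (U t i) + V (U t (i + 1))) ⬝ᵥ Ftil (U t i) (U t (i + 1)))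
        - 1 / 2 * (ψ (U t i) + ψ (U t (i + 1))))
    (hqhat : ∀ (t : ℝ) (i : ZMod N), qhat t i
      = qtil t i - 1 / 2 * (((1 / 2 : ℝ) • (V (U t i) + V (U t (i + 1)))) ⬝ᵥ
          (Dm t i).mulVec (V (U t (i + 1)) - V (U t i)))) :
    ∀ (t : ℝ) (i : ZMod N),
      deriv (fun τ => η (U τ i)) t + (qhat t i - qhat t (i - 1)) / Δx ≤ 0 := by
  intro t i
  -- derivative of the entropy along the solution
  have hd : HasDerivAt (fun τ => η (U τ i))
      (V (U t i) ⬝ᵥ (-(Δx)⁻¹ • (Fhat t i - Fhat t (i - 1)) - c t i • B (U t i))) t := by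
    have h1 := (hV (U t i)).comp_hasDerivAt t (hU t i)
    refine h1.congr_deriv ?_
    simp [ContinuousLinearMap.sum_apply, dotProduct, mul_comm]
  rw [hd.deriv]
  have hdot : V (U t i) ⬝ᵥ (-(Δx)⁻¹ • (Fhat t i - Fhat t (i - 1)) - c t i • B (U t i))
      = -(Δx)⁻¹ * (V (U t i) ⬝ᵥ (Fhat t i - Fhat t (i - 1))) := by
    simp [dotProduct_sub, dotProduct_smul, hB, smul_eq_mul]
  rw [hdot]
  -- edge identities
  have e1 := (edge_aux n (ψ (U t i)) (ψ (U t (i + 1))) (V (U t i)) (V (U t (i + 1)))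
      (Ftil (U t i) (U t (i + 1))) (Dm t i) (hjump _ _)).1
  have e2 := (edge_aux n (ψ (U t (i - 1))) (ψ (U t (i - 1 + 1))) (V (U t (i - 1)))
      (V (U t (i - 1 + 1))) (Ftil (U t (i - 1)) (U t (i - 1 + 1))) (Dm t (i - 1))
      (hjump _ _)).2
  rw [sub_add_cancel] at e2
  have hq1 : qhat t i = 1 / 2 * ((V (U t i) + V (U t (i + 1))) ⬝ᵥ Ftil (U t i) (U t (i + 1)))
      - 1 / 2 * (ψ (U t i) + ψ (U t (i + 1)))
      - 1 / 2 * (((1 / 2 : ℝ) • (V (U t i) + V (U t (i + 1)))) ⬝ᵥ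
        (Dm t i).mulVec (V (U t (i + 1)) - V (U t i))) := by
    rw [hqhat, hqtil]
  have hq2 : qhat t (i - 1) = 1 / 2 * ((V (U t (i - 1)) + V (U t i)) ⬝ᵥ
        Ftil (U t (i - 1)) (U t i))
      - 1 / 2 * (ψ (U t (i - 1)) + ψ (U t i))
      - 1 / 2 * (((1 / 2 : ℝ) • (V (U t (i - 1)) + V (U t i))) ⬝ᵥ
        (Dm t (i - 1)).mulVec (V (U t i) - V (U t (i - 1)))) := by
    rw [hqhat, hqtil, sub_add_cancel]
  have hF1 : Fhat t i = Ftil (U t i) (U t (i + 1))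
      - (1 / 2 : ℝ) • (Dm t i).mulVec (V (U t (i + 1)) - V (U t i)) := hFhat t i
  have hF2 : Fhat t (i - 1) = Ftil (U t (i - 1)) (U t i)
      - (1 / 2 : ℝ) • (Dm t (i - 1)).mulVec (V (U t i) - V (U t (i - 1))) := by
    rw [hFhat, sub_add_cancel]
  -- positive semidefiniteness
  have hpsd1 : 0 ≤ (V (U t (i + 1)) - V (U t i)) ⬝ᵥ
      (Dm t i).mulVec (V (U t (i + 1)) - V (U t i)) := by
    simpa using (hDpsd t i).dotProduct_mulVec_nonneg (V (U t (i + 1)) - V (U t i))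
  have hpsd2 : 0 ≤ (V (U t i) - V (U t (i - 1))) ⬝ᵥ
      (Dm t (i - 1)).mulVec (V (U t i) - V (U t (i - 1))) := by
    simpa using (hDpsd t (i - 1)).dotProduct_mulVec_nonneg (V (U t i) - V (U t (i - 1)))
  -- key inequality
  have key : qhat t i - qhat t (i - 1) ≤ V (U t i) ⬝ᵥ (Fhat t i - Fhat t (i - 1)) := by
    rw [dotProduct_sub, hF1, hF2, hq1, hq2]
    linarith [e1, e2]
  have hdiv : (qhat t i - qhat t (i - 1)) / Δx
      ≤ (V (U t i) ⬝ᵥ (Fhat t i - Fhat t (i - 1))) / Δx := by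
    gcongr
  simp only [div_eq_inv_mul] at hdiv ⊢
  linarith
end

section
/- (Total entropy decay on a periodic grid.) Under the hypotheses of the entropy stability lemma with non-conservative terms (scheme d/dt U_i = −(F̂_{i+1/2} − F̂_{i−1/2})/Δx − c_i B(U_i) on i ∈ ℤ/Nℤ, with F̂ built from a Tadmor entropy conservative flux and symmetric positive semidefinite dissipation matrices, and V(u)·B(u) = 0 for all u), the total entropy is non-increasing in time: d/dt Σ_{i ∈ ℤ/Nℤ} η(U_i(t)) ≤ 0. -/
open Matrix

/-- Total entropy decay on a periodic grid: under the hypotheses of the entropy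
stability lemma with non-conservative terms orthogonal to the entropy variables,
the total entropy `Σ_i η(U_i(t))` is non-increasing in time. -/
theorem tadmor_total_entropy_decay
    (n N : ℕ) (hn : 1 ≤ n) (hN : 1 ≤ N) [NeZero N] (Δx : ℝ) (hΔx : 0 < Δx)
    (η ψ : (Fin n → ℝ) → ℝ) (V : (Fin n → ℝ) → (Fin n → ℝ))
    (hV : ∀ u, HasFDerivAt η
      (∑ k, V u k • (ContinuousLinearMap.proj k : (Fin n → ℝ) →L[ℝ] ℝ)) u)
    (Ftil : (Fin n → ℝ) → (Fin n → ℝ) → (Fin n → ℝ))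
    (hjump : ∀ a b, (V b - V a) ⬝ᵥ Ftil a b = ψ b - ψ a)
    (Dm : ℝ → ZMod N → Matrix (Fin n) (Fin n) ℝ)
    (hDsym : ∀ (t : ℝ) (i : ZMod N), (Dm t i).IsSymm)
    (hDpsd : ∀ (t : ℝ) (i : ZMod N), (Dm t i).PosSemidef)
    (B : (Fin n → ℝ) → (Fin n → ℝ))
    (hB : ∀ u, V u ⬝ᵥ B u = 0)
    (c : ℝ → ZMod N → ℝ)
    (U : ℝ → ZMod N → (Fin n → ℝ))
    (Fhat : ℝ → ZMod N → (Fin n → ℝ))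
    (hFhat : ∀ (t : ℝ) (i : ZMod N), Fhat t i = Ftil (U t i) (U t (i + 1))
      - (1 / 2 : ℝ) • (Dm t i).mulVec (V (U t (i + 1)) - V (U t i)))
    (hU : ∀ (t : ℝ) (i : ZMod N), HasDerivAt (fun τ => U τ i)
      (-(Δx)⁻¹ • (Fhat t i - Fhat t (i - 1)) - c t i • B (U t i)) t) :
    ∀ t : ℝ, deriv (fun τ => ∑ i : ZMod N, η (U τ i)) t ≤ 0 := by
  intro t
  set W : ZMod N → (Fin n → ℝ) := fun i => V (U t i) with hWdef
  set G : ZMod N → (Fin n → ℝ) := fun i => Fhat t i with hGdef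
  have hderiv : ∀ i : ZMod N, HasDerivAt (fun τ => η (U τ i))
      (W i ⬝ᵥ (-(Δx)⁻¹ • (G i - G (i - 1)) - c t i • B (U t i))) t := by
    intro i
    have h := (hV (U t i)).comp_hasDerivAt t (hU t i)
    convert h using 1
    rfl
    rfl
    rfl
    simp [dotProduct, ContinuousLinearMap.sum_apply, W, G]
  have hsum : HasDerivAt (fun τ => ∑ i : ZMod N, η (U τ i))
      (∑ i : ZMod N, W i ⬝ᵥ (-(Δx)⁻¹ • (G i - G (i - 1)) - c t i • B (U t i))) t :=
    HasDerivAt.fun_sum (fun i _ => hderiv i)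
  rw [hsum.deriv]
  have h1 : ∀ i : ZMod N,
      W i ⬝ᵥ (-(Δx)⁻¹ • (G i - G (i - 1)) - c t i • B (U t i))
        = -(Δx)⁻¹ * (W i ⬝ᵥ G i - W i ⬝ᵥ G (i - 1)) := by
    intro i
    rw [dotProduct_sub, dotProduct_smul, dotProduct_smul, hB, dotProduct_sub]
    simp
  rw [Finset.sum_congr rfl (fun i _ => h1 i), ← Finset.mul_sum]
  -- reindex the second telescoping sum
  have h2 : ∑ i : ZMod N, W i ⬝ᵥ G (i - 1) = ∑ i : ZMod N, W (i + 1) ⬝ᵥ G i := by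
    refine Fintype.sum_equiv (Equiv.subRight (1 : ZMod N)) _ _ ?_
    intro j
    simp
  rw [Finset.sum_sub_distrib, h2, ← Finset.sum_sub_distrib]
  have h3 : ∀ i : ZMod N, W i ⬝ᵥ G i - W (i + 1) ⬝ᵥ G i
      = (ψ (U t i) - ψ (U t (i + 1)))
        + (1 / 2 : ℝ) * ((W (i + 1) - W i) ⬝ᵥ (Dm t i).mulVec (W (i + 1) - W i)) := by
    intro i
    have hj : (W (i + 1) - W i) ⬝ᵥ Ftil (U t i) (U t (i + 1))
        = ψ (U t (i + 1)) - ψ (U t i) := hjump (U t i) (U t (i + 1))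
    have : W i ⬝ᵥ G i - W (i + 1) ⬝ᵥ G i = -((W (i + 1) - W i) ⬝ᵥ G i) := by
      rw [sub_dotProduct]; ring
    rw [this, hGdef]
    simp only [hFhat t i]
    rw [dotProduct_sub, hj, dotProduct_smul]
    rw [smul_eq_mul]
    ring
  rw [Finset.sum_congr rfl (fun i _ => h3 i), Finset.sum_add_distrib]
  have h4 : ∑ i : ZMod N, (ψ (U t i) - ψ (U t (i + 1))) = 0 := by
    rw [Finset.sum_sub_distrib]
    have : ∑ i : ZMod N, ψ (U t (i + 1)) = ∑ i : ZMod N, ψ (U t i) :=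
      Fintype.sum_equiv (Equiv.addRight (1 : ZMod N)) _ _ (fun j => rfl)
    rw [this, sub_self]
  rw [h4, zero_add]
  have h5 : 0 ≤ ∑ i : ZMod N,
      (1 / 2 : ℝ) * ((W (i + 1) - W i) ⬝ᵥ (Dm t i).mulVec (W (i + 1) - W i)) := by
    refine Finset.sum_nonneg fun i _ => ?_
    have := (hDpsd t i).dotProduct_mulVec_nonneg (W (i + 1) - W i)
    simp only [star_trivial] at this
    positivity
  have hneg : -(Δx)⁻¹ ≤ 0 := by
    have := inv_pos.mpr hΔx
    linarith
  exact mul_nonpos_of_nonpos_of_nonneg hneg h5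
end

section
/- For every admissible state (h, v1, v2, P11, P12, P22) with h > 0 and D = P11 P22 − P12^2 > 0, and for arbitrary real parameters α ≥ 0, C_f, g, b_x, b_y, the entropy variable vector V satisfies V · S = 4 α |v|^3, where |v| = sqrt(v1^2 + v2^2) and S is the full SSW source vector S = (0, −g h b_x − C_f |v| v1, −g h b_y − C_f |v| v2, −α |v|^3 P11 − g h v1 b_x − C_f |v| v1^2, −α |v|^3 P12 − (1/2) g h v2 b_x − (1/2) g h v1 b_y − C_f |v| v1 v2, −α |v|^3 P22 − g h v2 b_y − C_f |v| v2^2). In particular, the bottom topography and Chezy friction terms make no contribution to the entropy production. -/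
open Matrix

/-!
The source has no mass component, so only the last five entropy variables matter, and these
are rational in the state with common denominator `D`. The source splits into four fixed
directions: the two bottom-slope directions and the Chezy direction `(0, v, v ⊗ v)` are
orthogonal to `V`, while the relaxation direction `(0, 0, P)` pairs with `V` to
`-2 P22 P11 + 4 P12² - 2 P11 P22 = -4 D` over `D`, i.e. to `-4`.
-/

section

variable (h v1 v2 P11 P12 P22 : ℝ)

theorem entVar_dotProduct_cons_zero (a b c d e : ℝ) :
    entVar h v1 v2 P11 P12 P22 ⬝ᵥ ![0, a, b, c, d, e] =
      (2 * (P22 * v1 - P12 * v2) * a + 2 * (P11 * v2 - P12 * v1) * b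
        - 2 * P22 * c + 4 * P12 * d - 2 * P11 * e) / (P11 * P22 - P12 ^ 2) := by
  simp only [entVar, dotProduct, Fin.sum_univ_six, cons_val]
  ring

theorem entVar_dotProduct_slope_x :
    entVar h v1 v2 P11 P12 P22 ⬝ᵥ ![0, 1, 0, v1, v2 / 2, 0] = 0 := by
  rw [entVar_dotProduct_cons_zero]
  ring

theorem entVar_dotProduct_slope_y :
    entVar h v1 v2 P11 P12 P22 ⬝ᵥ ![0, 0, 1, 0, v1 / 2, v2] = 0 := by
  rw [entVar_dotProduct_cons_zero]
  ring

theorem entVar_dotProduct_friction :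
    entVar h v1 v2 P11 P12 P22 ⬝ᵥ ![0, v1, v2, v1 ^ 2, v1 * v2, v2 ^ 2] = 0 := by
  rw [entVar_dotProduct_cons_zero]
  ring

theorem entVar_dotProduct_stress (hD : P11 * P22 - P12 ^ 2 ≠ 0) :
    entVar h v1 v2 P11 P12 P22 ⬝ᵥ ![0, 0, 0, P11, P12, P22] = -4 := by
  rw [entVar_dotProduct_cons_zero, div_eq_iff hD]
  ring

end

theorem ssw_entVar_dot_source_general (h v1 v2 P11 P12 P22 α Cf g bx by' : ℝ)
    (hD : 0 < P11 * P22 - P12 ^ 2) :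
    entVar h v1 v2 P11 P12 P22 ⬝ᵥ
      ![0,
        -(g * h * bx) - Cf * Real.sqrt (v1 ^ 2 + v2 ^ 2) * v1,
        -(g * h * by') - Cf * Real.sqrt (v1 ^ 2 + v2 ^ 2) * v2,
        -(α * Real.sqrt (v1 ^ 2 + v2 ^ 2) ^ 3 * P11) - g * h * v1 * bx
          - Cf * Real.sqrt (v1 ^ 2 + v2 ^ 2) * v1 ^ 2,
        -(α * Real.sqrt (v1 ^ 2 + v2 ^ 2) ^ 3 * P12) - 1 / 2 * g * h * v2 * bx
          - 1 / 2 * g * h * v1 * by' - Cf * Real.sqrt (v1 ^ 2 + v2 ^ 2) * v1 * v2,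
        -(α * Real.sqrt (v1 ^ 2 + v2 ^ 2) ^ 3 * P22) - g * h * v2 * by'
          - Cf * Real.sqrt (v1 ^ 2 + v2 ^ 2) * v2 ^ 2]
      = 4 * α * Real.sqrt (v1 ^ 2 + v2 ^ 2) ^ 3 := by
  set q := Real.sqrt (v1 ^ 2 + v2 ^ 2)
  have hsource : ![0,
        -(g * h * bx) - Cf * q * v1,
        -(g * h * by') - Cf * q * v2,
        -(α * q ^ 3 * P11) - g * h * v1 * bx - Cf * q * v1 ^ 2,
        -(α * q ^ 3 * P12) - 1 / 2 * g * h * v2 * bx - 1 / 2 * g * h * v1 * by'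
          - Cf * q * v1 * v2,
        -(α * q ^ 3 * P22) - g * h * v2 * by' - Cf * q * v2 ^ 2] =
      (-(g * h * bx)) • ![0, 1, 0, v1, v2 / 2, 0] + (-(g * h * by')) • ![0, 0, 1, 0, v1 / 2, v2]
        + (-(Cf * q)) • ![0, v1, v2, v1 ^ 2, v1 * v2, v2 ^ 2]
        + (-(α * q ^ 3)) • ![0, 0, 0, P11, P12, P22] := by
    ext i
    fin_cases i <;> simp <;> ring
  rw [hsource]
  simp only [dotProduct_add, dotProduct_smul, smul_eq_mul, entVar_dotProduct_slope_x,
    entVar_dotProduct_slope_y, entVar_dotProduct_friction,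
    entVar_dotProduct_stress _ _ _ _ _ _ hD.ne']
  ring

/-- The contribution of the full SSW source term to the entropy production is
`V · S = 4 α |v|³`: the bottom topography and Chezy friction terms contribute nothing. -/
theorem ssw_entVar_dot_source (h v1 v2 P11 P12 P22 α Cf g bx by' : ℝ)
    (hh : 0 < h) (hD : 0 < P11 * P22 - P12 ^ 2) (hα : 0 ≤ α) :
    entVar h v1 v2 P11 P12 P22 ⬝ᵥ
      ![0,
        -(g * h * bx) - Cf * Real.sqrt (v1 ^ 2 + v2 ^ 2) * v1,
        -(g * h * by') - Cf * Real.sqrt (v1 ^ 2 + v2 ^ 2) * v2,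
        -(α * Real.sqrt (v1 ^ 2 + v2 ^ 2) ^ 3 * P11) - g * h * v1 * bx
          - Cf * Real.sqrt (v1 ^ 2 + v2 ^ 2) * v1 ^ 2,
        -(α * Real.sqrt (v1 ^ 2 + v2 ^ 2) ^ 3 * P12) - 1 / 2 * g * h * v2 * bx
          - 1 / 2 * g * h * v1 * by' - Cf * Real.sqrt (v1 ^ 2 + v2 ^ 2) * v1 * v2,
        -(α * Real.sqrt (v1 ^ 2 + v2 ^ 2) ^ 3 * P22) - g * h * v2 * by'
          - Cf * Real.sqrt (v1 ^ 2 + v2 ^ 2) * v2 ^ 2]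
      = 4 * α * Real.sqrt (v1 ^ 2 + v2 ^ 2) ^ 3 :=
  ssw_entVar_dot_source_general h v1 v2 P11 P12 P22 α Cf g bx by' hD
end

section
/- (Godunov–Mock symmetrization lemma.) Let F : ℝ^n → ℝ^n be continuously differentiable, η : ℝ^n → ℝ twice continuously differentiable, and q : ℝ^n → ℝ continuously differentiable, such that the entropy compatibility condition ∇q(u) = (DF(u))ᵀ ∇η(u) holds for all u. Let u₀ be a point at which the Hessian H = D²η(u₀) is positive definite. Then H⁻¹ is symmetric positive definite and the matrix DF(u₀) · H⁻¹ is symmetric. -/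
open Matrix Asymptotics Filter

private lemma clm_pi_ext' {n : ℕ} {T S : (Fin n → ℝ) →L[ℝ] ℝ}
    (h : ∀ i, T (Pi.single i 1) = S (Pi.single i 1)) : T = S := by
  apply ContinuousLinearMap.ext
  intro x
  have hx : x = ∑ i, x i • (Pi.single i 1 : Fin n → ℝ) := by
    funext j
    simp [Pi.single_apply]
  rw [hx]
  simp only [map_sum, _root_.map_smul, h]

/-- Godunov–Mock symmetrization lemma: if `∇q(u) = (DF(u))ᵀ ∇η(u)` for all `u` and the
Hessian `H = D²η(u₀)` is positive definite, then `H⁻¹` is symmetric positive definite and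
`DF(u₀) · H⁻¹` is symmetric. -/
theorem godunov_mock_symmetrization
    (n : ℕ) (F : (Fin n → ℝ) → (Fin n → ℝ)) (η q : (Fin n → ℝ) → ℝ)
    (hF : ContDiff ℝ 1 F) (hη : ContDiff ℝ 2 η) (hq : ContDiff ℝ 1 q)
    (hcompat : ∀ (u : Fin n → ℝ) (i : Fin n),
      fderiv ℝ q u (Pi.single i 1)
        = ∑ j, fderiv ℝ (fun w => F w j) u (Pi.single i 1) * fderiv ℝ η u (Pi.single j 1))
    (u₀ : Fin n → ℝ)
    (H : Matrix (Fin n) (Fin n) ℝ)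
    (hH : H = Matrix.of fun i j =>
      fderiv ℝ (fun w => fderiv ℝ η w (Pi.single j 1)) u₀ (Pi.single i 1))
    (hHpd : H.PosDef)
    (J : Matrix (Fin n) (Fin n) ℝ)
    (hJ : J = Matrix.of fun i j => fderiv ℝ (fun w => F w i) u₀ (Pi.single j 1)) :
    (H⁻¹).IsSymm ∧ (H⁻¹).PosDef ∧ (J * H⁻¹).IsSymm := by
  classical
  have hFj : ∀ j, ContDiff ℝ 1 (fun w => F w j) := fun j => contDiff_pi.mp hF j
  set g : Fin n → (Fin n → ℝ) → ℝ := fun j w => fderiv ℝ η w (Pi.single j 1) with hg_def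
  have hgC : ∀ j, ContDiff ℝ 1 (g j) := by
    intro j
    exact (hη.fderiv_right (m := 1) (by norm_num)).clm_apply contDiff_const
  have hFjd : ∀ j u, DifferentiableAt ℝ (fun w => F w j) u :=
    fun j u => ((hFj j).differentiable one_ne_zero).differentiableAt
  have hgjd : ∀ j u, DifferentiableAt ℝ (g j) u :=
    fun j u => ((hgC j).differentiable one_ne_zero).differentiableAt
  have hqd : ∀ u, DifferentiableAt ℝ q u := fun u => (hq.differentiable one_ne_zero).differentiableAt
  -- compatibility as an identity of continuous linear maps
  have hcompat' : ∀ u, (∑ j, g j u • fderiv ℝ (fun w => F w j) u) = fderiv ℝ q u := by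
    intro u
    refine clm_pi_ext' fun i => ?_
    rw [hcompat u i]
    simp only [ContinuousLinearMap.sum_apply, ContinuousLinearMap.smul_apply, smul_eq_mul]
    exact Finset.sum_congr rfl fun j _ => mul_comm _ _
  -- the auxiliary potential Φ and its derivative L
  set Φ : (Fin n → ℝ) → ℝ := fun u => (∑ j, (F u j - F u₀ j) * g j u) - q u with hΦ_def
  set L : (Fin n → ℝ) → (Fin n → ℝ) →L[ℝ] ℝ :=
    fun u => ∑ j, (F u j - F u₀ j) • fderiv ℝ (g j) u with hL_def
  have hΦd : ∀ u, HasFDerivAt Φ (L u) u := by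
    intro u
    have h1 : HasFDerivAt (fun w => ∑ j, (F w j - F u₀ j) * g j w)
        (∑ j, ((F u j - F u₀ j) • fderiv ℝ (g j) u + g j u • fderiv ℝ (fun w => F w j) u)) u := by
      apply HasFDerivAt.fun_sum
      intro j _
      have hc : HasFDerivAt (fun w => F w j - F u₀ j) (fderiv ℝ (fun w => F w j) u) u :=
        ((hFjd j u).hasFDerivAt).sub_const _
      exact hc.mul ((hgjd j u).hasFDerivAt)
    have h2 := h1.sub ((hqd u).hasFDerivAt)
    have heq : (∑ j, ((F u j - F u₀ j) • fderiv ℝ (g j) u + g j u • fderiv ℝ (fun w => F w j) u))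
        - fderiv ℝ q u = L u := by
      rw [Finset.sum_add_distrib, ← hcompat' u, hL_def, add_sub_cancel_right]
    rw [hΦ_def, hL_def]
    rw [heq] at h2
    rw [hL_def] at h2
    exact h2
  -- the candidate second derivative of Φ at u₀
  set B : (Fin n → ℝ) →L[ℝ] ((Fin n → ℝ) →L[ℝ] ℝ) :=
    ∑ j, (fderiv ℝ (fun w => F w j) u₀).smulRight (fderiv ℝ (g j) u₀) with hB_def
  have hL0 : L u₀ = 0 := by
    rw [hL_def]
    simp
  have hLd : HasFDerivAt L B u₀ := by
    refine HasFDerivAt.of_isLittleO ?_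
    have key : (fun u => L u - L u₀ - B (u - u₀))
        = fun u => ∑ j, ((F u j - F u₀ j - fderiv ℝ (fun w => F w j) u₀ (u - u₀))
              • fderiv ℝ (g j) u
            + (fderiv ℝ (fun w => F w j) u₀ (u - u₀))
              • (fderiv ℝ (g j) u - fderiv ℝ (g j) u₀)) := by
      funext u
      rw [hL0, sub_zero, hL_def, hB_def]
      simp only [ContinuousLinearMap.sum_apply, ContinuousLinearMap.smulRight_apply]
      rw [← Finset.sum_sub_distrib]
      refine Finset.sum_congr rfl fun j _ => ?_
      module
    rw [key]
    apply Asymptotics.IsLittleO.fun_sum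
    intro j _
    apply Asymptotics.IsLittleO.add
    · have ha : (fun u => F u j - F u₀ j - fderiv ℝ (fun w => F w j) u₀ (u - u₀))
          =o[nhds u₀] (fun u => u - u₀) := ((hFjd j u₀).hasFDerivAt).isLittleO
      have hX : (fun u => fderiv ℝ (g j) u) =O[nhds u₀] (fun _ => (1 : ℝ)) :=
        (((hgC j).continuous_fderiv one_ne_zero).continuousAt (x := u₀)).isBigO_one ℝ
      have h2 := (isLittleO_norm_right.2 ha).smul_isBigO hX
      simp only [smul_eq_mul, mul_one] at h2
      exact isLittleO_norm_right.1 h2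
    · have hb : (fun u => fderiv ℝ (fun w => F w j) u₀ (u - u₀)) =O[nhds u₀]
          (fun u => u - u₀) := (fderiv ℝ (fun w => F w j) u₀).isBigO_comp _ _
      have hY : (fun u => fderiv ℝ (g j) u - fderiv ℝ (g j) u₀)
          =o[nhds u₀] (fun _ => (1 : ℝ)) := by
        rw [isLittleO_one_iff]
        have hc := (((hgC j).continuous_fderiv one_ne_zero).continuousAt (x := u₀)).sub_const
          (fderiv ℝ (g j) u₀)
        simpa using hc
      have h2 := (isBigO_norm_right.2 hb).smul_isLittleO hY
      simp only [smul_eq_mul, mul_one] at h2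
      exact isLittleO_norm_right.1 h2
  -- second derivative is symmetric
  have hsym := second_derivative_symmetric hΦd hLd
  have hHJ : ∀ k l, (H * J) k l = (H * J) l k := by
    intro k l
    have hskl := hsym (Pi.single k 1) (Pi.single l 1)
    rw [hB_def] at hskl
    simp only [ContinuousLinearMap.sum_apply, ContinuousLinearMap.smulRight_apply,
      smul_eq_mul] at hskl
    rw [hH, hJ]
    simp only [Matrix.mul_apply, Matrix.of_apply]
    have e1 : ∀ a b : Fin n,
        (∑ j, fderiv ℝ (fun w => fderiv ℝ η w (Pi.single j 1)) u₀ (Pi.single a 1)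
          * fderiv ℝ (fun w => F w j) u₀ (Pi.single b 1))
        = ∑ j, fderiv ℝ (fun w => F w j) u₀ (Pi.single b 1)
          * fderiv ℝ (g j) u₀ (Pi.single a 1) :=
      fun a b => Finset.sum_congr rfl fun j _ => mul_comm _ _
    rw [e1 k l, e1 l k]
    exact hskl.symm
  -- assemble matrix facts
  have hdet : IsUnit H.det := hHpd.det_pos.ne'.isUnit
  have hHsymm : Hᵀ = H := by
    have h := hHpd.isHermitian
    rwa [Matrix.IsHermitian, Matrix.conjTranspose_eq_transpose_of_trivial] at h
  have hHinvpd : (H⁻¹).PosDef := hHpd.inv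
  have hHinvsymm : (H⁻¹)ᵀ = H⁻¹ := by
    have h := hHinvpd.isHermitian
    rwa [Matrix.IsHermitian, Matrix.conjTranspose_eq_transpose_of_trivial] at h
  have hHJsymm : (H * J)ᵀ = H * J := by
    ext k l
    rw [Matrix.transpose_apply]
    exact hHJ l k
  have hJtH : Jᵀ * H = H * J := by
    calc Jᵀ * H = Jᵀ * Hᵀ := by rw [hHsymm]
      _ = (H * J)ᵀ := (Matrix.transpose_mul H J).symm
      _ = H * J := hHJsymm
  refine ⟨hHinvsymm, hHinvpd, ?_⟩
  show (J * H⁻¹)ᵀ = J * H⁻¹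
  calc (J * H⁻¹)ᵀ = (H⁻¹)ᵀ * Jᵀ := Matrix.transpose_mul _ _
    _ = H⁻¹ * Jᵀ := by rw [hHinvsymm]
    _ = J * H⁻¹ := by
      have h2 : Jᵀ = H * J * H⁻¹ := by
        rw [← hJtH, Matrix.mul_assoc, Matrix.mul_nonsing_inv _ hdet, Matrix.mul_one]
      rw [h2, ← Matrix.mul_assoc, ← Matrix.mul_assoc, Matrix.nonsing_inv_mul _ hdet,
        Matrix.one_mul]
end
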